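/- arXiv:2507.12101 — 5 statements merged into one kernel-verified Lean document; each statement's English description precedes it below -/
import Mathlib

section
/- Let n ≥ 2 be an integer and let k, ℓ ∈ ℤⁿ be linearly independent integer vectors. Then for all real numbers a, b, M > 0, the Lebesgue measure of the set {w ∈ ℝⁿ : |w| < M, |w·k| < a, |π_k^⊥w·ℓ| ≤ b} is at most 4 a b (2M)^{n−2}. -/
open MeasureTheory Set ENNReal Metric
open scoped RealInnerProductSpace

noncomputable section

/-- The cast of an integer vector to Euclidean space `ℝⁿ`. -/
def castZ {n : ℕ} (k : Fin n → ℤ) : EuclideanSpace ℝ (Fin n) := WithLp.toLp 2 (fun i => (k i : ℝ))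

/-- `projPerp k w = π_k^⊥ w`, the orthogonal projection of `w` onto the orthogonal
complement of `k`. -/
def projPerp {n : ℕ} (k w : EuclideanSpace ℝ (Fin n)) : EuclideanSpace ℝ (Fin n) :=
  w - (⟪w, k⟫ / ‖k‖ ^ 2) • k

/-- The ℓ¹-norm `|k|₁ = Σᵢ |kᵢ|` of an integer vector. -/
def normOneZ {n : ℕ} (k : Fin n → ℤ) : ℝ := ∑ i, |(k i : ℝ)|

/-- `k ∈ 𝒢ⁿ`: the components of `k` have gcd 1 and the first nonzero component of `k`
is strictly positive. -/
def Gn {n : ℕ} (k : Fin n → ℤ) : Prop :=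
  Finset.univ.gcd k = 1 ∧ ∃ i, 0 < k i ∧ ∀ j, j < i → k j = 0

/-- `k ∈ 𝒢ⁿ_K`. -/
def GnK {n : ℕ} (K : ℝ) (k : Fin n → ℤ) : Prop := Gn k ∧ normOneZ k ≤ K

/-- `l ∈ ℤk`, i.e. `l` is an integer multiple of `k`. -/
def inZk {n : ℕ} (k l : Fin n → ℤ) : Prop := ∃ m : ℤ, l = m • k

/-! Put `P = π_k^⊥ ℓ`. Then `π_k^⊥ w · ℓ = w · P` and `P ⊥ k`, so the set lies in the ball of
radius `M` cut by the slabs `|w · k| ≤ a` and `|w · P| ≤ b`. In an orthonormal basis starting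
with `k / |k|, P / |P|` this region sits inside a box of volume `(2a/|k|) (2b/|P|) (2M)^(n-2)`.
Finally `|k|² |P|² = |k|² |ℓ|² - (k · ℓ)²` is a positive integer, so `|k| |P| ≥ 1`. -/

section Slab

variable {E : Type*} [NormedAddCommGroup E] [InnerProductSpace ℝ E]

def slab (u : E) (α : ℝ) : Set E := {w | |⟪u, w⟫| ≤ α}

theorem closedBall_subset_slab {u : E} (hu : ‖u‖ ≤ 1) (M : ℝ) : closedBall 0 M ⊆ slab u M := by
  intro w hw
  rw [mem_closedBall_zero_iff] at hw
  calc |⟪u, w⟫| ≤ ‖u‖ * ‖w‖ := abs_real_inner_le_norm u w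
    _ ≤ 1 * M := by gcongr
    _ = M := one_mul M

theorem slab_smul {c : ℝ} (hc : 0 < c) (u : E) (α : ℝ) : slab (c • u) (c * α) = slab u α := by
  ext w
  simp only [slab, mem_ofPred_eq, real_inner_smul_left, abs_mul, abs_of_pos hc,
    mul_le_mul_iff_right₀ hc]

variable [FiniteDimensional ℝ E]

theorem Orthonormal.exists_orthonormalBasis_fin_zero_one {u v : E} (huv : Orthonormal ℝ ![u, v])
    {m : ℕ} (hm : Module.finrank ℝ E = m + 2) :
    ∃ B : OrthonormalBasis (Fin (m + 2)) ℝ E, B 0 = u ∧ B 1 = v := by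
  have hu : ‖u‖ = 1 := by simpa using huv.1 0
  have hv : ‖v‖ = 1 := by simpa using huv.1 1
  have huv0 : ⟪u, v⟫ = 0 := by simpa using huv.2 (zero_ne_one' (Fin 2))
  have hvu0 : ⟪v, u⟫ = 0 := by rwa [real_inner_comm]
  have hon : Orthonormal ℝ (({0, 1} : Set (Fin (m + 2))).domRestrict
      (Fin.cons u (Fin.cons v 0) : Fin (m + 2) → E)) := by
    rw [orthonormal_iff_ite]
    rintro ⟨i, hi⟩ ⟨j, hj⟩
    rcases hi with rfl | rfl <;> rcases hj with rfl | rfl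
    all_goals simp [hu, hv, huv0, hvu0, Subtype.ext_iff]
  obtain ⟨B, hB⟩ := hon.exists_orthonormalBasis_extension_of_card_eq (by simp [hm])
  exact ⟨B, by simpa using hB 0 (by simp), by simpa using hB 1 (by simp)⟩

variable [MeasurableSpace E] [BorelSpace E]

theorem OrthonormalBasis.volume_iInter_slab {ι : Type*} [Fintype ι] (B : OrthonormalBasis ι ℝ E)
    {c : ι → ℝ} (hc : ∀ i, 0 ≤ c i) :
    volume (⋂ i, slab (B i) (c i)) = ENNReal.ofReal (∏ i, 2 * c i) := by
  have hpre : ⋂ i, slab (B i) (c i) =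
      (WithLp.ofLp ∘ B.repr) ⁻¹' univ.pi fun i => Icc (-c i) (c i) := by
    ext w
    simp only [slab, mem_iInter, mem_ofPred_eq, mem_preimage, mem_univ_pi, mem_Icc, abs_le,
      Function.comp_apply, OrthonormalBasis.repr_apply_apply]
  rw [hpre, ((PiLp.volume_preserving_ofLp ι).comp B.measurePreserving_repr).measure_preimage
    (MeasurableSet.univ_pi fun _ => measurableSet_Icc).nullMeasurableSet, volume_pi_pi,
    ENNReal.ofReal_prod_of_nonneg fun i _ => by linarith [hc i]]
  congr 1 with i
  rw [Real.volume_Icc]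
  ring_nf

theorem Orthonormal.volume_closedBall_inter_slab_inter_slab_le {u v : E}
    (huv : Orthonormal ℝ ![u, v]) {α β M : ℝ} (hα : 0 ≤ α) (hβ : 0 ≤ β) (hM : 0 ≤ M) :
    volume (closedBall 0 M ∩ slab u α ∩ slab v β) ≤
      ENNReal.ofReal (2 * α * (2 * β) * (2 * M) ^ (Module.finrank ℝ E - 2)) := by
  obtain ⟨m, hm⟩ : ∃ m, Module.finrank ℝ E = m + 2 :=
    Nat.exists_eq_add_of_le' (by simpa using huv.linearIndependent.fintype_card_le_finrank)
  obtain ⟨B, rfl, rfl⟩ := huv.exists_orthonormalBasis_fin_zero_one hm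
  set c : Fin (m + 2) → ℝ := Fin.cons α (Fin.cons β fun _ => M)
  have hc : ∀ i, 0 ≤ c i := Fin.cases hα (Fin.cases hβ fun _ => hM)
  have hsub : closedBall 0 M ∩ slab (B 0) α ∩ slab (B 1) β ⊆ ⋂ i, slab (B i) (c i) := by
    rintro w ⟨⟨hwM, hwα⟩, hwβ⟩
    exact mem_iInter.2 <| Fin.cases hwα <| Fin.cases hwβ fun i =>
      closedBall_subset_slab (B.norm_eq_one _).le M hwM
  calc volume (closedBall 0 M ∩ slab (B 0) α ∩ slab (B 1) β)
      ≤ volume (⋂ i, slab (B i) (c i)) := measure_mono hsub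
    _ = _ := by
      rw [B.volume_iInter_slab hc, hm]
      simp [Fin.prod_univ_succ, c, mul_assoc]

theorem volume_closedBall_inter_slab_inter_slab_le_of_inner_eq_zero {x y : E} (hx : x ≠ 0)
    (hy : y ≠ 0) (hxy : ⟪x, y⟫ = 0) {α β M : ℝ} (hα : 0 ≤ α) (hβ : 0 ≤ β) (hM : 0 ≤ M) :
    volume (closedBall 0 M ∩ slab x α ∩ slab y β) ≤
      ENNReal.ofReal (2 * α / ‖x‖ * (2 * β / ‖y‖) * (2 * M) ^ (Module.finrank ℝ E - 2)) := by
  have hxy' : Orthonormal ℝ ![‖x‖⁻¹ • x, ‖y‖⁻¹ • y] := by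
    simp [norm_smul, real_inner_smul_left, real_inner_smul_right, hx, hy, hxy]
  have h := hxy'.volume_closedBall_inter_slab_inter_slab_le (α := ‖x‖⁻¹ * α) (β := ‖y‖⁻¹ * β)
    (by positivity) (by positivity) hM
  rw [slab_smul (by positivity), slab_smul (by positivity)] at h
  convert h using 3
  ring

end Slab

section ProjPerp

variable {n : ℕ} (k l w : EuclideanSpace ℝ (Fin n))

theorem inner_projPerp_left : ⟪projPerp k w, l⟫ = ⟪w, projPerp k l⟫ := by
  simp only [projPerp, inner_sub_left, inner_sub_right, real_inner_smul_left,
    real_inner_smul_right, real_inner_comm k l]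
  ring

theorem inner_projPerp_self : ⟪k, projPerp k w⟫ = 0 := by
  rcases eq_or_ne k 0 with rfl | hk
  · simp
  rw [projPerp, inner_sub_right, real_inner_smul_right, real_inner_self_eq_norm_sq,
    real_inner_comm, div_mul_cancel₀ _ (by positivity), sub_self]

theorem norm_sq_mul_norm_projPerp_sq :
    ‖k‖ ^ 2 * ‖projPerp k l‖ ^ 2 = ‖k‖ ^ 2 * ‖l‖ ^ 2 - ⟪k, l⟫ ^ 2 := by
  rcases eq_or_ne k 0 with rfl | hk
  · simp
  have : ‖k‖ ≠ 0 := norm_ne_zero_iff.2 hk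
  rw [← real_inner_self_eq_norm_sq (projPerp k l)]
  simp only [projPerp, inner_sub_left, inner_sub_right, real_inner_smul_left,
    real_inner_smul_right, real_inner_comm k l]
  simp only [real_inner_self_eq_norm_sq]
  field_simp
  ring

variable {k l} in
theorem projPerp_ne_zero (hkl : LinearIndependent ℝ ![k, l]) : projPerp k l ≠ 0 := by
  intro h
  refine one_ne_zero (LinearIndependent.pair_iff.1 hkl (-(⟪l, k⟫ / ‖k‖ ^ 2)) 1 ?_).2
  rw [← h, projPerp]
  module

end ProjPerp

theorem inner_castZ {n : ℕ} (k l : Fin n → ℤ) :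
    ⟪castZ k, castZ l⟫ = ((∑ i, k i * l i : ℤ) : ℝ) := by
  simp [castZ, PiLp.inner_apply, mul_comm]

theorem one_le_norm_mul_norm_projPerp_castZ {n : ℕ} {k l : Fin n → ℤ}
    (hkl : LinearIndependent ℝ ![castZ k, castZ l]) :
    1 ≤ ‖castZ k‖ * ‖projPerp (castZ k) (castZ l)‖ := by
  have hk : castZ k ≠ 0 := by simpa using hkl.ne_zero 0
  have hP := projPerp_ne_zero hkl
  have hpos : 0 < ‖castZ k‖ * ‖projPerp (castZ k) (castZ l)‖ := by positivity
  obtain ⟨D, hD⟩ : ∃ D : ℤ, (‖castZ k‖ * ‖projPerp (castZ k) (castZ l)‖) ^ 2 = D := by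
    refine ⟨(∑ i, k i * k i) * (∑ i, l i * l i) - (∑ i, k i * l i) ^ 2, ?_⟩
    rw [mul_pow, norm_sq_mul_norm_projPerp_sq, ← real_inner_self_eq_norm_sq,
      ← real_inner_self_eq_norm_sq, inner_castZ, inner_castZ, inner_castZ]
    push_cast
    ring
  have hD1 : 1 ≤ D := by
    have : (0 : ℝ) < D := hD ▸ pow_pos hpos 2
    exact_mod_cast this
  rw [← one_le_sq_iff₀ hpos.le, hD]
  exact_mod_cast hD1

theorem measure_slab_le_general (n : ℕ) (k l : Fin n → ℤ)
    (hkl : LinearIndependent ℝ ![castZ k, castZ l])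
    (a b M : ℝ) (ha : 0 < a) (hb : 0 < b) (hM : 0 < M) :
    volume {w : EuclideanSpace ℝ (Fin n) |
        ‖w‖ < M ∧ |⟪w, castZ k⟫| < a ∧ |⟪projPerp (castZ k) w, castZ l⟫| ≤ b} ≤
      ENNReal.ofReal (4 * a * b * (2 * M) ^ (n - 2)) := by
  set K := castZ k
  set P := projPerp K (castZ l)
  have hK : K ≠ 0 := by simpa using hkl.ne_zero 0
  have hsub : {w | ‖w‖ < M ∧ |⟪w, K⟫| < a ∧ |⟪projPerp K w, castZ l⟫| ≤ b} ⊆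
      closedBall 0 M ∩ slab K a ∩ slab P b := by
    rintro w ⟨hwM, hwK, hwP⟩
    refine ⟨⟨mem_closedBall_zero_iff.2 hwM.le, ?_⟩, ?_⟩
    · rw [slab, mem_ofPred_eq, real_inner_comm]
      exact hwK.le
    · rwa [slab, mem_ofPred_eq, real_inner_comm, ← inner_projPerp_left]
  have hKP : 2 * a / ‖K‖ * (2 * b / ‖P‖) ≤ 4 * a * b := by
    rw [show 2 * a / ‖K‖ * (2 * b / ‖P‖) = 4 * a * b / (‖K‖ * ‖P‖) by ring]
    exact div_le_self (by positivity) (one_le_norm_mul_norm_projPerp_castZ hkl)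
  calc _ ≤ volume (closedBall 0 M ∩ slab K a ∩ slab P b) := measure_mono hsub
    _ ≤ ENNReal.ofReal (2 * a / ‖K‖ * (2 * b / ‖P‖) * (2 * M) ^ (n - 2)) := by
      have := volume_closedBall_inter_slab_inter_slab_le_of_inner_eq_zero hK
        (projPerp_ne_zero hkl) (inner_projPerp_self K _) ha.le hb.le hM.le
      rwa [finrank_euclideanSpace_fin] at this
    _ ≤ ENNReal.ofReal (4 * a * b * (2 * M) ^ (n - 2)) := by gcongr

/-- For linearly independent integer vectors `k, ℓ ∈ ℤⁿ` (`n ≥ 2`) and reals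
`a, b, M > 0`, the Lebesgue measure of
`{w ∈ ℝⁿ : |w| < M, |w·k| < a, |π_k^⊥ w · ℓ| ≤ b}` is at most `4 a b (2M)^(n-2)`. -/
theorem measure_slab_le (n : ℕ) (hn : 2 ≤ n) (k l : Fin n → ℤ)
    (hkl : LinearIndependent ℝ ![castZ k, castZ l])
    (a b M : ℝ) (ha : 0 < a) (hb : 0 < b) (hM : 0 < M) :
    volume {w : EuclideanSpace ℝ (Fin n) |
        ‖w‖ < M ∧ |⟪w, castZ k⟫| < a ∧ |⟪projPerp (castZ k) w, castZ l⟫| ≤ b} ≤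
      ENNReal.ofReal (4 * a * b * (2 * M) ^ (n - 2)) :=
  measure_slab_le_general n k l hkl a b M ha hb hM
end
end

section
/- Let n ≥ 2 be an integer, γ, L, r > 0, and k ∈ ℤⁿ \ {0}. Let B̌ ⊂ ℝⁿ be a bounded convex open nonempty set and, for ρ > 0, write B̌^ρ := {v ∈ ℝⁿ : dist(v, B̌) < ρ}. Set řₖ := r/(n|k|_∞), t̃ₖ := min{1, γ|k|/(2L)}, 𝔯ₖ := t̃ₖ·r/(8 n^{3/2} |k|), and ϖ₀ := √n·L·|k|·𝔯ₖ. Let h₀ : B̌^{2řₖ} → ℝ be continuously differentiable and satisfy: (a) |∂₁h₀(v) − ∂₁h₀(v')| ≤ L|k|·|v − v'| for all v, v' ∈ B̌^{2řₖ}; (b) ∂₁h₀(t, v̂) − ∂₁h₀(t', v̂) ≥ γ|k|²(t − t') whenever (t, v̂), (t', v̂) ∈ B̌^{2řₖ} and t > t'. Define Z := {v ∈ B̌^{(5/4)řₖ} : ∂₁h₀(v) = 0} and, for ϖ ∈ ℝ, Z_ϖ := {v ∈ B̌^{řₖ} : ∂₁h₀(v) = ϖ}. For j ∈ ℤ^{n−1}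 let Q_j := 𝔯ₖ·(j + [0,1)^{n−1}) ⊂ ℝ^{n−1}, let J := {j ∈ ℤ^{n−1} : there exists (t, v̂) ∈ Z with v̂ ∈ Q_j}, and Q := ⋃_{j ∈ J} Q_j. Then there exists a function η : [−ϖ₀, ϖ₀] × Q → ℝ such that: (i) for every (ϖ, v̂) ∈ [−ϖ₀, ϖ₀] × Q the point (η(ϖ, v̂), v̂) belongs to B̌^{(3/2)řₖ} and ∂₁h₀(η(ϖ, v̂), v̂) = ϖ; (ii) for every ϖ with |ϖ| ≤ ϖ₀ one has Z_ϖ ⊆ {(η(ϖ, v̂), v̂) : v̂ ∈ Q}; (iii) |η(ϖ, v̂) − η(ϖ', v̂)| ≤ |ϖ − ϖ'|/(γ|k|²) for all ϖ, ϖ' ∈ [−ϖ₀, ϖ₀] and v̂ ∈ Q. -/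
open MeasureTheory Set ENNReal Metric
open scoped RealInnerProductSpace

noncomputable section

/-- The max-norm `|k|_∞` of an integer vector, as a real number. -/
def normInfZ {n : ℕ} (k : Fin n → ℤ) : ℝ :=
  ((Finset.univ.sup fun i => (k i).natAbs : ℕ) : ℝ)

/-- The point `(t, vh) ∈ ℝ^(m+1)` with first coordinate `t` and remaining coordinates `vh`. -/
def mkE {m : ℕ} (t : ℝ) (vh : EuclideanSpace ℝ (Fin m)) : EuclideanSpace ℝ (Fin (m + 1)) :=
  WithLp.toLp 2 (fun i => (Fin.cons t (fun j => vh j) : Fin (m + 1) → ℝ) i)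

/-- The last `m` coordinates `vh` of a point `v ∈ ℝ^(m+1)`. -/
def tailE {m : ℕ} (v : EuclideanSpace ℝ (Fin (m + 1))) : EuclideanSpace ℝ (Fin m) :=
  WithLp.toLp 2 (fun j : Fin m => v j.succ)

/-- The partial derivative `∂₁ h₀` with respect to the first coordinate. -/
def D1 {m : ℕ} (h0 : EuclideanSpace ℝ (Fin (m + 1)) → ℝ)
    (v : EuclideanSpace ℝ (Fin (m + 1))) : ℝ :=
  deriv (fun t => h0 (mkE t (tailE v))) (v 0)

/-- The half-open cube `Q_j = 𝔯ₖ (j + [0,1)^m)` of edge `𝔯ₖ` and lower left corner `𝔯ₖ j`. -/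
def Qcube {m : ℕ} (frk : ℝ) (j : Fin m → ℤ) : Set (EuclideanSpace ℝ (Fin m)) :=
  {vh | ∀ i, frk * j i ≤ vh i ∧ vh i < frk * (j i + 1)}

/-- The zero set `Z := {v ∈ B̌^{(5/4)řₖ} : ∂₁h₀(v) = 0}`. -/
def Zset {m : ℕ} (h0 : EuclideanSpace ℝ (Fin (m + 1)) → ℝ)
    (B : Set (EuclideanSpace ℝ (Fin (m + 1)))) (rk : ℝ) :
    Set (EuclideanSpace ℝ (Fin (m + 1))) :=
  {v ∈ Metric.thickening ((5 / 4) * rk) B | D1 h0 v = 0}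

/-- The index set `J` of cubes meeting the projection of `Z`. -/
def Jset {m : ℕ} (h0 : EuclideanSpace ℝ (Fin (m + 1)) → ℝ)
    (B : Set (EuclideanSpace ℝ (Fin (m + 1)))) (rk frk : ℝ) : Set (Fin m → ℤ) :=
  {j | ∃ v ∈ Zset h0 B rk, tailE v ∈ Qcube frk j}

/-- The set `Q := ⋃_{j ∈ J} Q_j`. -/
def Qset {m : ℕ} (h0 : EuclideanSpace ℝ (Fin (m + 1)) → ℝ)
    (B : Set (EuclideanSpace ℝ (Fin (m + 1)))) (rk frk : ℝ) :
    Set (EuclideanSpace ℝ (Fin m)) :=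
  ⋃ j ∈ Jset h0 B rk frk, Qcube frk j

/-! Along every vertical line `t ↦ (t, v̂)` the function `∂₁h₀` increases at rate at least
`γ|k|²`, and it moves by at most `L|k|·|v̂ - ŵ|` when the line is shifted from `ŵ` to `v̂`.
Starting from a zero `(t₀, ŵ)` of `∂₁h₀` and a point `v̂` of the same cube, the values of `∂₁h₀`
at `(t₀ ± řₖ/8, v̂)` therefore straddle every level `|ϖ| ≤ ϖ₀`, and the intermediate value
theorem produces `η(ϖ, v̂)`; strong monotonicity makes it unique and `1/(γ|k|²)`-Lipschitz in
`ϖ`. Conversely, a level point `v ∈ B̌^{řₖ}` is joined by the same argument along its own line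
to a zero of `∂₁h₀`, so that `v̂ ∈ Q`. -/

lemma mem_thickening_add_of_dist_le {α : Type*} [PseudoMetricSpace α] {s : Set α} {a d : ℝ}
    {x y : α} (hx : x ∈ thickening a s) (hxy : dist y x ≤ d) : y ∈ thickening (a + d) s := by
  obtain ⟨z, hz, hxz⟩ := mem_thickening_iff.1 hx
  exact mem_thickening_iff.2 ⟨z, hz, by linarith [dist_triangle y x z]⟩

section

variable {m : ℕ}

@[simp]
lemma tailE_mkE (t : ℝ) (vh : EuclideanSpace ℝ (Fin m)) : tailE (mkE t vh) = vh := by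
  ext j; simp [tailE, mkE]

@[simp]
lemma mkE_apply_zero_tailE (v : EuclideanSpace ℝ (Fin (m + 1))) : mkE (v 0) (tailE v) = v := by
  ext i
  refine Fin.cases rfl (fun j => ?_) i
  simp [mkE, tailE]

lemma dist_mkE_mkE_same_left (t : ℝ) (vh wh : EuclideanSpace ℝ (Fin m)) :
    dist (mkE t vh) (mkE t wh) = dist vh wh := by
  simp [EuclideanSpace.dist_eq, Fin.sum_univ_succ, mkE]

lemma dist_mkE_mkE_same_right (t t' : ℝ) (vh : EuclideanSpace ℝ (Fin m)) :
    dist (mkE t vh) (mkE t' vh) = dist t t' := by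
  simp [EuclideanSpace.dist_eq, Fin.sum_univ_succ, mkE]

lemma dist_mkE_mkE_le (t t' : ℝ) (vh wh : EuclideanSpace ℝ (Fin m)) :
    dist (mkE t vh) (mkE t' wh) ≤ dist t t' + dist vh wh := by
  simpa [dist_mkE_mkE_same_right, dist_mkE_mkE_same_left] using
    dist_triangle (mkE t vh) (mkE t' vh) (mkE t' wh)

lemma isometry_mkE (vh : EuclideanSpace ℝ (Fin m)) : Isometry fun t : ℝ => mkE t vh :=
  Isometry.of_dist_eq fun t t' => dist_mkE_mkE_same_right t t' vh

def StronglyMonotoneInFst (c : ℝ) (F : EuclideanSpace ℝ (Fin (m + 1)) → ℝ)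
    (U : Set (EuclideanSpace ℝ (Fin (m + 1)))) : Prop :=
  ∀ (t t' : ℝ) (vh : EuclideanSpace ℝ (Fin m)), mkE t vh ∈ U → mkE t' vh ∈ U → t' < t →
    c * (t - t') ≤ F (mkE t vh) - F (mkE t' vh)

variable {K : NNReal} {c δ ϖ t₀ t t' : ℝ} {F : EuclideanSpace ℝ (Fin (m + 1)) → ℝ}
  {U : Set (EuclideanSpace ℝ (Fin (m + 1)))} {vh wh : EuclideanSpace ℝ (Fin m)}

namespace StronglyMonotoneInFst

lemma mul_sub_le (hF : StronglyMonotoneInFst c F U) (ht : mkE t vh ∈ U) (ht' : mkE t' vh ∈ U)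
    (hle : t' ≤ t) : c * (t - t') ≤ F (mkE t vh) - F (mkE t' vh) := by
  rcases hle.lt_or_eq with hlt | rfl
  · exact hF t t' vh ht ht' hlt
  · simp

lemma mul_abs_sub_le (hF : StronglyMonotoneInFst c F U) (ht : mkE t vh ∈ U)
    (ht' : mkE t' vh ∈ U) : c * |t - t'| ≤ |F (mkE t vh) - F (mkE t' vh)| := by
  rcases le_total t' t with hle | hle
  · rw [abs_of_nonneg (sub_nonneg.2 hle)]
    exact (hF.mul_sub_le ht ht' hle).trans (le_abs_self _)
  · rw [abs_sub_comm, abs_of_nonneg (sub_nonneg.2 hle), abs_sub_comm]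
    exact (hF.mul_sub_le ht' ht hle).trans (le_abs_self _)

lemma eq_of_apply_eq (hF : StronglyMonotoneInFst c F U) (hc : 0 < c) (ht : mkE t vh ∈ U)
    (ht' : mkE t' vh ∈ U) (heq : F (mkE t vh) = F (mkE t' vh)) : t = t' := by
  have := hF.mul_abs_sub_le ht ht'
  rw [heq, sub_self, abs_zero] at this
  exact sub_eq_zero.1 (abs_nonpos_iff.1 (nonpos_of_mul_nonpos_right this hc))

lemma exists_graph (hF : StronglyMonotoneInFst c F U) (hc : 0 < c)
    {V : Set (EuclideanSpace ℝ (Fin (m + 1)))} (hVU : V ⊆ U) {W : Set ℝ}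
    {Q : Set (EuclideanSpace ℝ (Fin m))}
    (hex : ∀ ϖ ∈ W, ∀ vh ∈ Q, ∃ t, mkE t vh ∈ V ∧ F (mkE t vh) = ϖ) :
    ∃ η : ℝ → EuclideanSpace ℝ (Fin m) → ℝ,
      (∀ ϖ ∈ W, ∀ vh ∈ Q, mkE (η ϖ vh) vh ∈ V ∧ F (mkE (η ϖ vh) vh) = ϖ) ∧
      (∀ ϖ ∈ W, ∀ vh ∈ Q, ∀ t, mkE t vh ∈ U → F (mkE t vh) = ϖ → η ϖ vh = t) ∧
      (∀ ϖ ϖ', ϖ ∈ W → ϖ' ∈ W → ∀ vh ∈ Q, |η ϖ vh - η ϖ' vh| ≤ |ϖ - ϖ'| / c) := by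
  refine ⟨fun ϖ vh => Classical.epsilon fun t => mkE t vh ∈ V ∧ F (mkE t vh) = ϖ,
    fun ϖ hϖ vh hvh => Classical.epsilon_spec (hex ϖ hϖ vh hvh), ?_, ?_⟩
  · intro ϖ hϖ vh hvh t ht hFt
    obtain ⟨hη, hηϖ⟩ := Classical.epsilon_spec (hex ϖ hϖ vh hvh)
    exact hF.eq_of_apply_eq hc (hVU hη) ht (hηϖ.trans hFt.symm)
  · intro ϖ ϖ' hϖ hϖ' vh hvh
    obtain ⟨hη, hηϖ⟩ := Classical.epsilon_spec (hex ϖ hϖ vh hvh)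
    obtain ⟨hη', hηϖ'⟩ := Classical.epsilon_spec (hex ϖ' hϖ' vh hvh)
    rw [le_div_iff₀ hc, mul_comm]
    simpa only [hηϖ, hηϖ'] using hF.mul_abs_sub_le (hVU hη) (hVU hη')

end StronglyMonotoneInFst

/-- Along the line through `wh`, `F` moves by at least `c * δ` on either side of `t₀`; shifting
the line to `vh` changes `F` by at most `K * dist vh wh`. -/
lemma exists_mem_closedBall_apply_mkE_eq (hLip : LipschitzOnWith K F U)
    (hmono : StronglyMonotoneInFst c F U)
    (hδ : 0 ≤ δ) (hwh : ∀ t ∈ closedBall t₀ δ, mkE t wh ∈ U)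
    (hvh : ∀ t ∈ closedBall t₀ δ, mkE t vh ∈ U)
    (hϖ : |ϖ - F (mkE t₀ wh)| + K * dist vh wh ≤ c * δ) :
    ∃ t ∈ closedBall t₀ δ, F (mkE t vh) = ϖ := by
  rw [Real.closedBall_eq_Icc] at hwh hvh ⊢
  have hlo : t₀ - δ ∈ Icc (t₀ - δ) (t₀ + δ) := ⟨le_rfl, by linarith⟩
  have hhi : t₀ + δ ∈ Icc (t₀ - δ) (t₀ + δ) := ⟨by linarith, le_rfl⟩
  have hmid : t₀ ∈ Icc (t₀ - δ) (t₀ + δ) := ⟨by linarith, by linarith⟩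
  have hshift : ∀ t ∈ Icc (t₀ - δ) (t₀ + δ), |F (mkE t vh) - F (mkE t wh)| ≤ K * dist vh wh :=
    fun t ht => by
      simpa [Real.dist_eq, dist_mkE_mkE_same_left] using
        hLip.dist_le_mul _ (hvh t ht) _ (hwh t ht)
  have hrise := hmono.mul_sub_le (hwh _ hhi) (hwh _ hmid) (by linarith)
  have hfall := hmono.mul_sub_le (hwh _ hmid) (hwh _ hlo) (by linarith)
  have hcont : ContinuousOn (fun t => F (mkE t vh)) (Icc (t₀ - δ) (t₀ + δ)) :=
    hLip.continuousOn.comp (isometry_mkE vh).continuous.continuousOn hvh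
  exact intermediate_value_Icc (by linarith) hcont
    (show ϖ ∈ Icc (F (mkE (t₀ - δ) vh)) (F (mkE (t₀ + δ) vh)) by
      have := abs_le.1 (hshift _ hlo)
      have := abs_le.1 (hshift _ hhi)
      have := le_abs_self (ϖ - F (mkE t₀ wh))
      have := neg_abs_le (ϖ - F (mkE t₀ wh))
      constructor <;> linarith)

lemma exists_mkE_mem_thickening_apply_eq {a b e : ℝ} {B : Set (EuclideanSpace ℝ (Fin (m + 1)))}
    (hLip : LipschitzOnWith K F (thickening b B))
    (hmono : StronglyMonotoneInFst c F (thickening b B))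
    (hz : mkE t₀ wh ∈ thickening a B) (hδ : 0 ≤ δ) (he : a + δ + dist vh wh ≤ e) (heb : e ≤ b)
    (hϖ : |ϖ - F (mkE t₀ wh)| + K * dist vh wh ≤ c * δ) :
    ∃ t, mkE t vh ∈ thickening e B ∧ F (mkE t vh) = ϖ := by
  have hnear : ∀ uh, dist uh wh ≤ dist vh wh → ∀ t ∈ closedBall t₀ δ,
      mkE t uh ∈ thickening e B := fun uh huh t ht => by
    refine thickening_mono ?_ B (mem_thickening_add_of_dist_le hz (dist_mkE_mkE_le t t₀ uh wh))
    linarith [mem_closedBall.1 ht]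
  obtain ⟨t, ht, hFt⟩ := exists_mem_closedBall_apply_mkE_eq hLip hmono hδ
    (fun t ht => thickening_mono heb B (hnear wh (by simp) t ht))
    (fun t ht => thickening_mono heb B (hnear vh le_rfl t ht)) hϖ
  exact ⟨t, hnear vh le_rfl t ht, hFt⟩

lemma mem_Qcube_floor {frk : ℝ} (hfrk : 0 < frk) (wh : EuclideanSpace ℝ (Fin m)) :
    wh ∈ Qcube frk (fun i => ⌊wh i / frk⌋) := fun i => by
  refine ⟨?_, ?_⟩
  · rw [mul_comm, ← le_div_iff₀ hfrk]
    exact Int.floor_le _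
  · rw [mul_comm frk, ← div_lt_iff₀ hfrk]
    simp [Int.lt_floor_add_one]

lemma dist_le_of_mem_Qcube {frk : ℝ} (hfrk : 0 ≤ frk) {j : Fin m → ℤ} (hvh : vh ∈ Qcube frk j)
    (hwh : wh ∈ Qcube frk j) : dist vh wh ≤ √m * frk := by
  have hcoord : ∀ i, dist (vh i) (wh i) ^ 2 ≤ frk ^ 2 := fun i => by
    rw [Real.dist_eq, sq_abs]
    nlinarith [hvh i, hwh i]
  calc dist vh wh ≤ √(∑ _i : Fin m, frk ^ 2) := by
        rw [EuclideanSpace.dist_eq]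
        exact Real.sqrt_le_sqrt (Finset.sum_le_sum fun i _ => hcoord i)
    _ = √m * frk := by simp [Real.sqrt_mul (Nat.cast_nonneg _), Real.sqrt_sq hfrk]

section ZeroSet

variable {h0 : EuclideanSpace ℝ (Fin (m + 1)) → ℝ} {B : Set (EuclideanSpace ℝ (Fin (m + 1)))}
  {rk frk : ℝ}

lemma exists_mem_Zset_dist_tailE_le (hfrk : 0 ≤ frk) (hvh : vh ∈ Qset h0 B rk frk) :
    ∃ z ∈ Zset h0 B rk, dist vh (tailE z) ≤ √m * frk := by
  simp only [Qset, Jset, mem_iUnion₂] at hvh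
  obtain ⟨j, ⟨z, hz, hzj⟩, hvj⟩ := hvh
  exact ⟨z, hz, dist_le_of_mem_Qcube hfrk hvj hzj⟩

lemma tailE_mem_Qset {z : EuclideanSpace ℝ (Fin (m + 1))} (hfrk : 0 < frk)
    (hz : z ∈ Zset h0 B rk) : tailE z ∈ Qset h0 B rk frk :=
  mem_iUnion₂.2 ⟨_, ⟨z, hz, mem_Qcube_floor hfrk _⟩, mem_Qcube_floor hfrk _⟩

lemma exists_mkE_mem_thickening_D1_eq_of_mem_Qset
    (hLip : LipschitzOnWith K (D1 h0) (thickening (2 * rk) B))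
    (hmono : StronglyMonotoneInFst c (D1 h0) (thickening (2 * rk) B))
    {s : ℝ} (hfrk : 0 ≤ frk) (hs : √m * frk ≤ s) (hsrk : s ≤ rk / 8)
    (hϖ : |ϖ| + K * s ≤ c * (rk / 8)) (hvh : vh ∈ Qset h0 B rk frk) :
    ∃ t, mkE t vh ∈ thickening (3 / 2 * rk) B ∧ D1 h0 (mkE t vh) = ϖ := by
  obtain ⟨z, ⟨hz, hz0⟩, hd⟩ := exists_mem_Zset_dist_tailE_le hfrk hvh
  rw [← mkE_apply_zero_tailE z] at hz hz0
  have hs0 : 0 ≤ s := (mul_nonneg (Real.sqrt_nonneg _) hfrk).trans hs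
  refine exists_mkE_mem_thickening_apply_eq (δ := rk / 8) hLip hmono hz (by linarith)
    (by linarith) (by linarith) ?_
  rw [hz0, sub_zero]
  have : (K : ℝ) * dist vh (tailE z) ≤ K * s := by gcongr; linarith
  linarith

lemma tailE_mem_Qset_of_mem_thickening
    (hLip : LipschitzOnWith K (D1 h0) (thickening (2 * rk) B))
    (hmono : StronglyMonotoneInFst c (D1 h0) (thickening (2 * rk) B))
    (hfrk : 0 < frk) (hrk : 0 ≤ rk) {v : EuclideanSpace ℝ (Fin (m + 1))}
    (hv : v ∈ thickening rk B) (hv0 : |D1 h0 v| ≤ c * (rk / 4)) :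
    tailE v ∈ Qset h0 B rk frk := by
  rw [← mkE_apply_zero_tailE v] at hv hv0
  obtain ⟨t, ht, ht0⟩ := exists_mkE_mem_thickening_apply_eq (e := 5 / 4 * rk) (δ := rk / 4)
    (ϖ := 0) (vh := tailE v) hLip hmono hv (by linarith) (by rw [dist_self]; linarith)
    (by linarith) (by simpa using hv0)
  simpa using tailE_mem_Qset hfrk ⟨ht, ht0⟩

end ZeroSet

end

lemma castZ_ne_zero {n : ℕ} {k : Fin n → ℤ} (hk : k ≠ 0) : castZ k ≠ 0 := fun h =>
  hk <| funext fun i => by simpa [castZ] using congrArg (fun x => x i) h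

lemma normInfZ_pos {n : ℕ} {k : Fin n → ℤ} (hk : k ≠ 0) : 0 < normInfZ k := by
  obtain ⟨i, hi⟩ := Function.ne_iff.1 hk
  rw [normInfZ, Nat.cast_pos]
  exact (Int.natAbs_pos.2 hi).trans_le
    (Finset.le_sup (f := fun i => (k i).natAbs) (Finset.mem_univ i))

lemma normInfZ_le_norm_castZ {n : ℕ} (k : Fin n → ℤ) : normInfZ k ≤ ‖castZ k‖ := by
  rw [normInfZ]
  rcases isEmpty_or_nonempty (Fin n) with _ | _
  · simp
  · obtain ⟨i, -, hi⟩ := Finset.univ.exists_mem_eq_sup Finset.univ_nonempty fun i => (k i).natAbs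
    rw [hi, Nat.cast_natAbs]
    simpa [castZ] using PiLp.norm_apply_le (castZ k) i

lemma resonance_scales {M N a γ L r tk rk frk w0 : ℝ} (hM : 0 < M) (hN : 0 < N) (hNa : N ≤ a)
    (hL : 0 ≤ L) (hr : 0 < r) (htk0 : 0 < tk) (htk1 : tk ≤ 1) (htkγ : 2 * L * tk ≤ γ * a)
    (hrk : rk = r / (M * N)) (hfrk : frk = tk * r / (8 * M ^ ((3 : ℝ) / 2) * a))
    (hw0 : w0 = √M * L * a * frk) :
    0 < rk ∧ 0 < frk ∧ √M * frk ≤ rk / 8 ∧ 16 * w0 ≤ γ * a ^ 2 * rk := by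
  have ha : 0 < a := hN.trans_le hNa
  have hM32 : M ^ ((3 : ℝ) / 2) = M * √M := by
    rw [show (3 : ℝ) / 2 = 1 + 1 / 2 by norm_num, Real.rpow_add hM, Real.rpow_one,
      ← Real.sqrt_eq_rpow]
  have hsqrt : 0 < √M := Real.sqrt_pos.2 hM
  have hcube : √M * frk = tk * N / a * (rk / 8) := by
    rw [hfrk, hrk, hM32]
    field_simp
  subst hrk
  refine ⟨by positivity, by rw [hfrk]; positivity, ?_, ?_⟩
  · rw [hcube]
    have : tk * N / a ≤ 1 := by rw [div_le_one ha]; nlinarith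
    nlinarith [show 0 ≤ r / (M * N) / 8 by positivity]
  · have hw : 16 * w0 = 2 * L * tk * N * (r / (M * N)) := by
      rw [hw0, show √M * L * a * frk = L * a * (√M * frk) by ring, hcube]
      field_simp
      ring
    rw [hw]
    have : 2 * L * tk * N ≤ γ * a ^ 2 := by
      nlinarith [mul_le_mul_of_nonneg_left hNa (by positivity : 0 ≤ 2 * L * tk),
        mul_le_mul_of_nonneg_right htkγ ha.le]
    gcongr

theorem resonance_graph_general (m : ℕ)
    (γ L r : ℝ) (hγ : 0 < γ) (hL : 0 < L) (hr : 0 < r)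
    (k : Fin (m + 1) → ℤ) (hk : k ≠ 0)
    (B : Set (EuclideanSpace ℝ (Fin (m + 1))))
    (rk tk frk w0 : ℝ)
    (hrk : rk = r / ((m + 1) * normInfZ k))
    (htk : tk = min 1 (γ * ‖castZ k‖ / (2 * L)))
    (hfrk : frk = tk * r / (8 * ((m + 1 : ℕ) : ℝ) ^ ((3 : ℝ) / 2) * ‖castZ k‖))
    (hw0 : w0 = Real.sqrt ((m + 1 : ℕ) : ℝ) * L * ‖castZ k‖ * frk)
    (h0 : EuclideanSpace ℝ (Fin (m + 1)) → ℝ)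
    (hLip : ∀ v ∈ Metric.thickening (2 * rk) B, ∀ v' ∈ Metric.thickening (2 * rk) B,
      |D1 h0 v - D1 h0 v'| ≤ L * ‖castZ k‖ * ‖v - v'‖)
    (hmono : ∀ (t t' : ℝ) (vh : EuclideanSpace ℝ (Fin m)),
      mkE t vh ∈ Metric.thickening (2 * rk) B →
      mkE t' vh ∈ Metric.thickening (2 * rk) B → t' < t →
      γ * ‖castZ k‖ ^ 2 * (t - t') ≤ D1 h0 (mkE t vh) - D1 h0 (mkE t' vh)) :
    ∃ η : ℝ → EuclideanSpace ℝ (Fin m) → ℝ,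
      (∀ ϖ : ℝ, |ϖ| ≤ w0 → ∀ vh ∈ Qset h0 B rk frk,
        mkE (η ϖ vh) vh ∈ Metric.thickening ((3 / 2) * rk) B ∧
        D1 h0 (mkE (η ϖ vh) vh) = ϖ) ∧
      (∀ ϖ : ℝ, |ϖ| ≤ w0 →
        {v ∈ Metric.thickening rk B | D1 h0 v = ϖ} ⊆
          {v | ∃ vh ∈ Qset h0 B rk frk, v = mkE (η ϖ vh) vh}) ∧
      (∀ ϖ ϖ' : ℝ, |ϖ| ≤ w0 → |ϖ'| ≤ w0 → ∀ vh ∈ Qset h0 B rk frk,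
        |η ϖ vh - η ϖ' vh| ≤ |ϖ - ϖ'| / (γ * ‖castZ k‖ ^ 2)) := by
  have hk0 : 0 < ‖castZ k‖ := norm_pos_iff.2 (castZ_ne_zero hk)
  have htkγ : 2 * L * tk ≤ γ * ‖castZ k‖ := by
    rw [htk, ← le_div_iff₀' (by positivity)]
    exact min_le_right _ _
  obtain ⟨hrk0, hfrk0, hcube, hw0c⟩ := resonance_scales (by positivity) (normInfZ_pos hk)
    (normInfZ_le_norm_castZ k) hL.le hr (by rw [htk]; positivity) (htk ▸ min_le_left _ _) htkγ
    (hrk.trans (by push_cast; rfl)) hfrk hw0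
  have hc : 0 < γ * ‖castZ k‖ ^ 2 := by positivity
  have hLk : ((L * ‖castZ k‖).toNNReal : ℝ) = L * ‖castZ k‖ := Real.coe_toNNReal _ (by positivity)
  have hLip' : LipschitzOnWith (L * ‖castZ k‖).toNNReal (D1 h0) (thickening (2 * rk) B) :=
    .of_dist_le_mul fun v hv v' hv' => by
      simpa [Real.dist_eq, dist_eq_norm, hLk] using hLip v hv v' hv'
  have hlevel : ∀ ϖ ∈ {ϖ : ℝ | |ϖ| ≤ w0}, ∀ vh ∈ Qset h0 B rk frk,
      ∃ t, mkE t vh ∈ thickening (3 / 2 * rk) B ∧ D1 h0 (mkE t vh) = ϖ :=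
    fun ϖ hϖ vh hvh => exists_mkE_mem_thickening_D1_eq_of_mem_Qset hLip' hmono hfrk0.le
      (by gcongr; simp) hcube (by rw [hLk]; linarith [show |ϖ| ≤ w0 from hϖ]) hvh
  obtain ⟨η, hη, huniq, hηlip⟩ :=
    StronglyMonotoneInFst.exists_graph hmono hc (thickening_mono (by linarith) B) hlevel
  refine ⟨η, hη, ?_, hηlip⟩
  rintro ϖ hϖ v ⟨hv, rfl⟩
  have hvh := tailE_mem_Qset_of_mem_thickening hLip' hmono hfrk0 hrk0.le hv
    (by linarith [mul_pos hc hrk0])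
  refine ⟨tailE v, hvh, ?_⟩
  rw [huniq _ hϖ _ hvh (v 0) (by simpa using thickening_mono (by linarith) B hv) (by simp),
    mkE_apply_zero_tailE]

/-- Proposition 1.1 of the paper, real form.  Near a simple resonance the
level sets of `∂₁h₀` are graphs `y₁ = η(ϖ, ŷ)` over the uniform domain `Q` of slow actions,
with Lipschitz dependence on the level `ϖ`. -/
theorem resonance_graph (m : ℕ) (hm : 1 ≤ m)
    (γ L r : ℝ) (hγ : 0 < γ) (hL : 0 < L) (hr : 0 < r)
    (k : Fin (m + 1) → ℤ) (hk : k ≠ 0)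
    (B : Set (EuclideanSpace ℝ (Fin (m + 1))))
    (hBne : B.Nonempty) (hBopen : IsOpen B) (hBconv : Convex ℝ B)
    (hBbd : Bornology.IsBounded B)
    (rk tk frk w0 : ℝ)
    (hrk : rk = r / ((m + 1) * normInfZ k))
    (htk : tk = min 1 (γ * ‖castZ k‖ / (2 * L)))
    (hfrk : frk = tk * r / (8 * ((m + 1 : ℕ) : ℝ) ^ ((3 : ℝ) / 2) * ‖castZ k‖))
    (hw0 : w0 = Real.sqrt ((m + 1 : ℕ) : ℝ) * L * ‖castZ k‖ * frk)
    (h0 : EuclideanSpace ℝ (Fin (m + 1)) → ℝ)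
    (hsmooth : ContDiffOn ℝ 1 h0 (Metric.thickening (2 * rk) B))
    (hLip : ∀ v ∈ Metric.thickening (2 * rk) B, ∀ v' ∈ Metric.thickening (2 * rk) B,
      |D1 h0 v - D1 h0 v'| ≤ L * ‖castZ k‖ * ‖v - v'‖)
    (hmono : ∀ (t t' : ℝ) (vh : EuclideanSpace ℝ (Fin m)),
      mkE t vh ∈ Metric.thickening (2 * rk) B →
      mkE t' vh ∈ Metric.thickening (2 * rk) B → t' < t →
      γ * ‖castZ k‖ ^ 2 * (t - t') ≤ D1 h0 (mkE t vh) - D1 h0 (mkE t' vh)) :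
    ∃ η : ℝ → EuclideanSpace ℝ (Fin m) → ℝ,
      (∀ ϖ : ℝ, |ϖ| ≤ w0 → ∀ vh ∈ Qset h0 B rk frk,
        mkE (η ϖ vh) vh ∈ Metric.thickening ((3 / 2) * rk) B ∧
        D1 h0 (mkE (η ϖ vh) vh) = ϖ) ∧
      (∀ ϖ : ℝ, |ϖ| ≤ w0 →
        {v ∈ Metric.thickening rk B | D1 h0 v = ϖ} ⊆
          {v | ∃ vh ∈ Qset h0 B rk frk, v = mkE (η ϖ vh) vh}) ∧
      (∀ ϖ ϖ' : ℝ, |ϖ| ≤ w0 → |ϖ'| ≤ w0 → ∀ vh ∈ Qset h0 B rk frk,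
        |η ϖ vh - η ϖ' vh| ≤ |ϖ - ϖ'| / (γ * ‖castZ k‖ ^ 2)) :=
  resonance_graph_general m γ L r hγ hL hr k hk B rk tk frk w0 hrk htk hfrk hw0 h0 hLip hmono
end
end

section
/- Let n ≥ 2 be an integer, y₁⁰ ∈ ℂ, ŷ⁰ ∈ ℂ^{n−1}, r₁, r̂ > 0, and let F be a holomorphic function on an open set containing the product 𝒴₁ × 𝒴̂, where 𝒴₁ is the closed ball of radius r₁ centred at y₁⁰ in ℂ and 𝒴̂ is the closed ball of radius r̂ centred at ŷ⁰ in ℂ^{n−1}. Suppose d ∈ ℂ, d ≠ 0, is such that sup_{ŷ ∈ 𝒴̂} |F(y₁⁰, ŷ)| ≤ |d|·r₁/2 and sup_{(y₁, ŷ) ∈ 𝒴₁ × 𝒴̂} |∂_{y₁}F(y₁, ŷ) − d| ≤ |d|/2. Then there exists a unique continuous function η : 𝒴̂ → 𝒴₁, holomorphic on the interior of 𝒴̂, such that F(η(ŷ), ŷ) = 0 for every ŷ ∈ 𝒴̂; moreover η is the fixed point of the contraction η ↦ η − F(η(·), ·)/d on the space of continuous maps 𝒴̂ → 𝒴₁ that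 are holomorphic in the interior of 𝒴̂, endowed with the sup-norm. -/
/-!
For fixed `ŷ`, the bound on `∂_{y₁}F` makes `w ↦ w - F (w, ŷ) / d` a `1/2`-contraction on the
disc `𝒴₁`, and the bound on `F (y₁⁰, ŷ)` makes it map `𝒴₁` into itself; its unique fixed point
`η ŷ` is the unique zero of `F (·, ŷ)` in `𝒴₁`. Comparing the fixed points for `ŷ` and `ŷ₀` gives
`‖η ŷ - η ŷ₀‖ ≤ 2 ‖F (η ŷ₀, ŷ)‖ / ‖d‖`, hence continuity. At interior points, holomorphy is the
easy half of the inverse function theorem for `(w, ŷ) ↦ (F (w, ŷ), ŷ)`, whose derivative is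
invertible because `∂_{y₁}F ≠ 0`.
-/

open Metric Set Filter Topology Function
open scoped NNReal

theorem LipschitzOnWith.dist_le_of_isFixedPt {X : Type*} [PseudoMetricSpace X] {φ : X → X}
    {s : Set X} {K : ℝ≥0} (hφ : LipschitzOnWith K φ s) (hK : K < 1) {x y : X} (hx : x ∈ s)
    (hy : y ∈ s) (hfix : IsFixedPt φ x) : dist x y ≤ dist y (φ y) / (1 - K) := by
  have hK' : 0 < 1 - (K : ℝ) := sub_pos.2 hK
  rw [le_div_iff₀ hK']
  have := calc dist x y = dist (φ x) y := by rw [hfix.eq]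
    _ ≤ dist (φ x) (φ y) + dist (φ y) y := dist_triangle _ _ _
    _ ≤ K * dist x y + dist y (φ y) := by
      rw [dist_comm (φ y)]; gcongr; exact hφ.dist_le_mul x hx y hy
  linarith

theorem LipschitzOnWith.exists_isFixedPt_closedBall {X : Type*} [MetricSpace X] [CompleteSpace X]
    {φ : X → X} {c : X} {r : ℝ} {K : ℝ≥0} (hφ : LipschitzOnWith K φ (closedBall c r))
    (hK : K < 1) (hc : dist c (φ c) ≤ (1 - K) * r) : ∃ x ∈ closedBall c r, IsFixedPt φ x := by
  have hr : 0 ≤ r := nonneg_of_mul_nonneg_right (dist_nonneg.trans hc) (sub_pos.2 hK)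
  have hmaps : MapsTo φ (closedBall c r) (closedBall c r) := fun x hx => by
    rw [mem_closedBall] at hx ⊢
    calc dist (φ x) c ≤ dist (φ x) (φ c) + dist c (φ c) := by
          rw [dist_comm c]; exact dist_triangle _ _ _
      _ ≤ K * r + (1 - K) * r := by
          gcongr
          exact (hφ.dist_le_mul x hx c (mem_closedBall_self hr)).trans (by gcongr)
      _ = r := by ring
  obtain ⟨x, hx, hfix, -⟩ := ContractingWith.exists_fixedPoint' isClosed_closedBall.isComplete
    hmaps ⟨hK, hφ.mapsToRestrict hmaps⟩ (mem_closedBall_self hr) (edist_ne_top _ _)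
  exact ⟨x, hx, hfix⟩

section Newton

variable {𝕜 : Type*} [RCLike 𝕜] {f : 𝕜 → 𝕜} {s : Set 𝕜} {d : 𝕜} {K : ℝ≥0}

theorem ne_zero_of_norm_sub_le_mul (hd : d ≠ 0) (hK : K < 1) {a : 𝕜} (ha : ‖a - d‖ ≤ K * ‖d‖) :
    a ≠ 0 := by
  rintro rfl
  rw [zero_sub, norm_neg] at ha
  exact absurd (le_of_mul_le_mul_right (by simpa using ha) (norm_pos_iff.2 hd)) (not_le.2 hK)

theorem isFixedPt_sub_div_iff (hd : d ≠ 0) {w : 𝕜} :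
    IsFixedPt (fun w => w - f w / d) w ↔ f w = 0 := by
  simp [IsFixedPt, hd]

theorem Convex.lipschitzOnWith_sub_div (hs : Convex ℝ s) (hd : d ≠ 0)
    (hf : ∀ w ∈ s, DifferentiableAt 𝕜 f w) (hbound : ∀ w ∈ s, ‖deriv f w - d‖ ≤ K * ‖d‖) :
    LipschitzOnWith K (fun w => w - f w / d) s := by
  refine hs.lipschitzOnWith_of_nnnorm_hasDerivWithin_le (f' := fun w => 1 - deriv f w / d)
    (fun w hw => ((hasDerivAt_id w).sub ((hf w hw).hasDerivAt.div_const d)).hasDerivWithinAt)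
    fun w hw => ?_
  have hd' : 0 < ‖d‖ := norm_pos_iff.2 hd
  rw [← NNReal.coe_le_coe, coe_nnnorm, ← norm_neg, neg_sub, ← div_self hd, ← sub_div, norm_div,
    div_le_iff₀ hd']
  exact hbound w hw

theorem Convex.norm_sub_le_of_apply_eq_zero (hs : Convex ℝ s) (hd : d ≠ 0) (hK : K < 1)
    (hf : ∀ w ∈ s, DifferentiableAt 𝕜 f w) (hbound : ∀ w ∈ s, ‖deriv f w - d‖ ≤ K * ‖d‖)
    {x y : 𝕜} (hx : x ∈ s) (hy : y ∈ s) (hfx : f x = 0) :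
    ‖x - y‖ ≤ ‖f y‖ / ((1 - K) * ‖d‖) := by
  have := (hs.lipschitzOnWith_sub_div hd hf hbound).dist_le_of_isFixedPt hK hx hy
    ((isFixedPt_sub_div_iff hd).2 hfx)
  rwa [dist_eq_norm, dist_eq_norm, sub_sub_cancel, norm_div, div_div, mul_comm] at this

theorem existsUnique_mem_closedBall_apply_eq_zero {c : 𝕜} {r : ℝ} (hd : d ≠ 0) (hK : K < 1)
    (hf : ∀ w ∈ closedBall c r, DifferentiableAt 𝕜 f w)
    (hbound : ∀ w ∈ closedBall c r, ‖deriv f w - d‖ ≤ K * ‖d‖)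
    (hc : ‖f c‖ ≤ (1 - K) * ‖d‖ * r) : ∃! w ∈ closedBall c r, f w = 0 := by
  have hd' : 0 < ‖d‖ := norm_pos_iff.2 hd
  obtain ⟨x, hx, hfix⟩ := ((convex_closedBall c r).lipschitzOnWith_sub_div hd hf hbound)
    |>.exists_isFixedPt_closedBall hK (by
      rwa [dist_eq_norm, sub_sub_cancel, norm_div, div_le_iff₀ hd', mul_right_comm])
  refine ⟨x, ⟨hx, (isFixedPt_sub_div_iff hd).1 hfix⟩, fun y ⟨hy, hfy⟩ => ?_⟩
  have := (convex_closedBall c r).norm_sub_le_of_apply_eq_zero hd hK hf hbound hx hy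
    ((isFixedPt_sub_div_iff hd).1 hfix)
  rw [hfy, norm_zero, zero_div] at this
  exact (sub_eq_zero.1 (norm_le_zero_iff.1 this)).symm

theorem continuousWithinAt_of_apply_eq_zero {X : Type*} [TopologicalSpace X] {F : 𝕜 × X → 𝕜}
    {η : X → 𝕜} {S : Set X} {T : Set 𝕜} {z₀ : X} (hT : Convex ℝ T) (hd : d ≠ 0) (hK : K < 1)
    (hF : ∀ z ∈ S, ∀ w ∈ T, DifferentiableAt 𝕜 (fun u => F (u, z)) w)
    (hbound : ∀ z ∈ S, ∀ w ∈ T, ‖deriv (fun u => F (u, z)) w - d‖ ≤ K * ‖d‖)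
    (hηT : ∀ z ∈ S, η z ∈ T) (hη : ∀ z ∈ S, F (η z, z) = 0) (hz₀ : z₀ ∈ S)
    (hcont : ContinuousWithinAt (fun z => F (η z₀, z)) S z₀) : ContinuousWithinAt η S z₀ := by
  rw [ContinuousWithinAt, ← tendsto_sub_nhds_zero_iff]
  refine squeeze_zero_norm' (a := fun z => ‖F (η z₀, z)‖ / ((1 - K) * ‖d‖)) ?_ ?_
  · filter_upwards [self_mem_nhdsWithin] with z hz
    exact hT.norm_sub_le_of_apply_eq_zero hd hK (hF z hz) (hbound z hz) (hηT z hz) (hηT z₀ hz₀)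
      (hη z hz)
  · simpa [hη z₀ hz₀] using (hcont.norm.div_const ((1 - K) * ‖d‖)).tendsto

end Newton

section Implicit

variable {𝕜 E : Type*} [NontriviallyNormedField 𝕜] [NormedAddCommGroup E] [NormedSpace 𝕜 E]

theorem HasFDerivAt.of_eventually_apply_eq_zero {G : 𝕜 × E → 𝕜} {L : 𝕜 × E →L[𝕜] 𝕜}
    {η : E → 𝕜} {z₀ : E} (hG : HasFDerivAt G L (η z₀, z₀)) (hL : L (1, 0) ≠ 0)
    (hη : ContinuousAt η z₀) (hzero : ∀ᶠ z in 𝓝 z₀, G (η z, z) = 0) :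
    HasFDerivAt η (-(L (1, 0))⁻¹ • L.comp (.inr 𝕜 𝕜 E)) z₀ := by
  set a := L (1, 0)
  have hL_apply (w : 𝕜) (z : E) : L (w, z) - L (0, z) = w * a := by
    rw [← map_sub, ← smul_eq_mul, ← map_smul]; simp
  -- `Ψ` is a left inverse of `(w, z) ↦ (L (w, z), z)`, the derivative of `p ↦ (G p, p.2)`
  set Ψ : 𝕜 × E →L[𝕜] 𝕜 × E :=
    (a⁻¹ • (.fst 𝕜 𝕜 E - L.comp (.inr 𝕜 𝕜 E) ∘L .snd 𝕜 𝕜 E)).prod (.snd 𝕜 𝕜 E)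
  have hΨ : LeftInverse Ψ (L.prod (.snd 𝕜 𝕜 E)) := by
    rintro ⟨w, z⟩
    ext
    · simp [Ψ, hL_apply, mul_comm w, hL]
    · simp [Ψ]
  have hgraph := (hG.prodMk hasFDerivAt_snd).of_comp_of_leftInverse
    (g := fun z => (η z, z)) (hη.prodMk continuousAt_id)
    ((hasFDerivAt_const 0 z₀).prodMk (hasFDerivAt_id z₀)) ?_ hΨ
  · refine (hasFDerivAt_fst.comp z₀ hgraph).congr_fderiv ?_
    ext z
    simp [Ψ]
  · filter_upwards [hzero] with z hz
    simp [hz]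

theorem DifferentiableAt.of_eventually_apply_eq_zero {G : 𝕜 × E → 𝕜} {η : E → 𝕜} {z₀ : E}
    (hG : DifferentiableAt 𝕜 G (η z₀, z₀)) (hG₁ : deriv (fun w => G (w, z₀)) (η z₀) ≠ 0)
    (hη : ContinuousAt η z₀) (hzero : ∀ᶠ z in 𝓝 z₀, G (η z, z) = 0) :
    DifferentiableAt 𝕜 η z₀ := by
  have hpartial : deriv (fun w => G (w, z₀)) (η z₀) = fderiv 𝕜 G (η z₀, z₀) (1, 0) :=
    (hG.hasFDerivAt.comp_hasDerivAt (η z₀)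
      ((hasDerivAt_id (η z₀)).prodMk (hasDerivAt_const (η z₀) z₀))).deriv
  rw [hpartial] at hG₁
  exact (hG.hasFDerivAt.of_eventually_apply_eq_zero hG₁ hη hzero).differentiableAt

end Implicit

theorem holomorphic_implicit_function_general (n : ℕ)
    (y₁ : ℂ) (yh : EuclideanSpace ℂ (Fin (n - 1))) (r₁ rh : ℝ)
    (F : ℂ × EuclideanSpace ℂ (Fin (n - 1)) → ℂ)
    (U : Set (ℂ × EuclideanSpace ℂ (Fin (n - 1)))) (hUopen : IsOpen U)
    (hU : closedBall y₁ r₁ ×ˢ closedBall yh rh ⊆ U)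
    (hF : DifferentiableOn ℂ F U)
    (d : ℂ) (hd : d ≠ 0)
    (hF0 : ∀ z ∈ closedBall yh rh, ‖F (y₁, z)‖ ≤ ‖d‖ * r₁ / 2)
    (hF1 : ∀ w ∈ closedBall y₁ r₁, ∀ z ∈ closedBall yh rh,
      ‖deriv (fun u => F (u, z)) w - d‖ ≤ ‖d‖ / 2) :
    ∃ η : EuclideanSpace ℂ (Fin (n - 1)) → ℂ,
      (∀ z ∈ closedBall yh rh, η z ∈ closedBall y₁ r₁) ∧
      ContinuousOn η (closedBall yh rh) ∧
      DifferentiableOn ℂ η (interior (closedBall yh rh)) ∧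
      (∀ z ∈ closedBall yh rh, F (η z, z) = 0) ∧
      (∀ η' : EuclideanSpace ℂ (Fin (n - 1)) → ℂ,
        (∀ z ∈ closedBall yh rh, η' z ∈ closedBall y₁ r₁) →
        ContinuousOn η' (closedBall yh rh) →
        DifferentiableOn ℂ η' (interior (closedBall yh rh)) →
        (∀ z ∈ closedBall yh rh, F (η' z, z) = 0) →
        ∀ z ∈ closedBall yh rh, η' z = η z) ∧
      (∀ z ∈ closedBall yh rh, η z - F (η z, z) / d = η z) := by
  have hK : (2⁻¹ : ℝ≥0) < 1 := by norm_num
  have hFdiff : ∀ z ∈ closedBall yh rh, ∀ w ∈ closedBall y₁ r₁, DifferentiableAt ℂ F (w, z) :=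
    fun z hz w hw => hF.differentiableAt (hUopen.mem_nhds (hU ⟨hw, hz⟩))
  have hslice : ∀ z ∈ closedBall yh rh, ∀ w ∈ closedBall y₁ r₁,
      DifferentiableAt ℂ (fun u => F (u, z)) w := fun z hz w hw =>
    (hFdiff z hz w hw).comp w (differentiableAt_id.prodMk (differentiableAt_const z))
  have hbound : ∀ z ∈ closedBall yh rh, ∀ w ∈ closedBall y₁ r₁,
      ‖deriv (fun u => F (u, z)) w - d‖ ≤ (2⁻¹ : ℝ≥0) * ‖d‖ := fun z hz w hw => by
    simpa [div_eq_inv_mul] using hF1 w hw z hz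
  have hroot (z) (hz : z ∈ closedBall yh rh) : ∃! w ∈ closedBall y₁ r₁, F (w, z) = 0 :=
    existsUnique_mem_closedBall_apply_eq_zero hd hK (hslice z hz) (hbound z hz) (by
      push_cast; linarith [hF0 z hz])
  choose! η hηmem hηzero using fun z hz => (hroot z hz).exists
  have hηcont : ContinuousOn η (closedBall yh rh) := fun z₀ hz₀ =>
    continuousWithinAt_of_apply_eq_zero (convex_closedBall y₁ r₁) hd hK hslice hbound hηmem
      hηzero hz₀ ((hFdiff z₀ hz₀ _ (hηmem z₀ hz₀)).continuousAt.comp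
        (continuous_const.prodMk continuous_id).continuousAt).continuousWithinAt
  refine ⟨η, hηmem, hηcont, fun z₀ hz₀ => ?_, hηzero,
    fun η' hη'mem _ _ hη'zero z hz => (hroot z hz).unique ⟨hη'mem z hz, hη'zero z hz⟩
      ⟨hηmem z hz, hηzero z hz⟩, fun z hz => by simp [hηzero z hz]⟩
  have hS : closedBall yh rh ∈ 𝓝 z₀ := mem_interior_iff_mem_nhds.1 hz₀
  have hz₀S := interior_subset hz₀
  exact (DifferentiableAt.of_eventually_apply_eq_zero (hFdiff z₀ hz₀S _ (hηmem z₀ hz₀S))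
    (ne_zero_of_norm_sub_le_mul hd hK (hbound z₀ hz₀S _ (hηmem z₀ hz₀S)))
    (hηcont.continuousAt hS) (eventually_of_mem hS hηzero)).differentiableWithinAt

/-- contraction/implicit-function step in the proof of Proposition 1.1.
If `F` is holomorphic on a neighbourhood of the product of closed balls `𝒴₁ × 𝒴̂ ⊆ ℂ × ℂ^(n-1)`,
`d ≠ 0`, `|F(y₁⁰, ·)| ≤ |d| r₁ / 2` on `𝒴̂` and `|∂_{y₁}F − d| ≤ |d|/2` on `𝒴₁ × 𝒴̂`, then there
is a unique continuous `η : 𝒴̂ → 𝒴₁`, holomorphic on the interior of `𝒴̂`, with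
`F(η(ŷ), ŷ) = 0` on `𝒴̂`; moreover `η` is a fixed point of `η ↦ η − F(η(·), ·)/d`. -/
theorem holomorphic_implicit_function (n : ℕ) (hn : 2 ≤ n)
    (y₁ : ℂ) (yh : EuclideanSpace ℂ (Fin (n - 1))) (r₁ rh : ℝ)
    (hr₁ : 0 < r₁) (hrh : 0 < rh)
    (F : ℂ × EuclideanSpace ℂ (Fin (n - 1)) → ℂ)
    (U : Set (ℂ × EuclideanSpace ℂ (Fin (n - 1)))) (hUopen : IsOpen U)
    (hU : closedBall y₁ r₁ ×ˢ closedBall yh rh ⊆ U)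
    (hF : DifferentiableOn ℂ F U)
    (d : ℂ) (hd : d ≠ 0)
    (hF0 : ∀ z ∈ closedBall yh rh, ‖F (y₁, z)‖ ≤ ‖d‖ * r₁ / 2)
    (hF1 : ∀ w ∈ closedBall y₁ r₁, ∀ z ∈ closedBall yh rh,
      ‖deriv (fun u => F (u, z)) w - d‖ ≤ ‖d‖ / 2) :
    ∃ η : EuclideanSpace ℂ (Fin (n - 1)) → ℂ,
      (∀ z ∈ closedBall yh rh, η z ∈ closedBall y₁ r₁) ∧
      ContinuousOn η (closedBall yh rh) ∧
      DifferentiableOn ℂ η (interior (closedBall yh rh)) ∧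
      (∀ z ∈ closedBall yh rh, F (η z, z) = 0) ∧
      (∀ η' : EuclideanSpace ℂ (Fin (n - 1)) → ℂ,
        (∀ z ∈ closedBall yh rh, η' z ∈ closedBall y₁ r₁) →
        ContinuousOn η' (closedBall yh rh) →
        DifferentiableOn ℂ η' (interior (closedBall yh rh)) →
        (∀ z ∈ closedBall yh rh, F (η' z, z) = 0) →
        ∀ z ∈ closedBall yh rh, η' z = η z) ∧
      (∀ z ∈ closedBall yh rh, η z - F (η z, z) / d = η z) :=
  holomorphic_implicit_function_general n y₁ yh r₁ rh F U hUopen hU hF d hd hF0 hF1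
end

section
/- Let n ≥ 2 be an integer, let γ, L, α > 0, let K ≥ 1 be real, and let 𝕮 ≥ 2nL/γ. Let k ∈ ℤⁿ be a vector whose components have greatest common divisor 1, and let A be an n×n integer matrix with determinant 1 whose first row is k and whose entries satisfy max_{i,j}|A_{ij}| = |k|_∞. Let ω : ℝⁿ → ℝⁿ satisfy |ω(y) − ω(y')| ≤ L|y − y'| for all y, y' ∈ ℝⁿ. Let D̂ ⊆ ℝ^{n−1} and let η : [−α/𝕮, α/𝕮] × D̂ → ℝ satisfy |η(ϖ, v̂) − η(ϖ', v̂)| ≤ |ϖ − ϖ'|/(γ|k|²) for all ϖ, ϖ' ∈ [−α/𝕮, α/𝕮] and v̂ ∈ D̂. Say that a point v ∈ ℝⁿ belongs to Dᵏ if |ω(Aᵀv)·k| ≤ α/𝕮 and |π_k^⊥ω(Aᵀv)·ℓ| ≥ 3αK^{n+3}/|k| for every ℓ ∈ 𝒢ⁿ_K \ ℤk. Assume that for every v̂ ∈ D̂ there exists z₁ ∈ [η(−α/𝕮, v̂), η(α/𝕮, v̂)] such that (z₁, v̂) ∈ Dᵏ. Then for every v = (v₁, v̂) with v̂ ∈ D̂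 and η(−α/𝕮, v̂) ≤ v₁ ≤ η(α/𝕮, v̂), and for every ℓ ∈ 𝒢ⁿ_K \ ℤk, one has |π_k^⊥ω(Aᵀv)·ℓ| ≥ 2αK^{n+3}/|k|. -/
open MeasureTheory Set ENNReal Metric
open scoped RealInnerProductSpace

noncomputable section

open Matrix

/-- The max-norm `|k|_∞` of an integer vector, as a natural number. -/
def normInfN {n : ℕ} (k : Fin n → ℤ) : ℕ := Finset.univ.sup fun i => (k i).natAbs

/-- Multiplication of a real `n×n` matrix with a vector of `ℝⁿ`. -/
def mulVecE {n : ℕ} (A : Matrix (Fin n) (Fin n) ℝ) (v : EuclideanSpace ℝ (Fin n)) :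
    EuclideanSpace ℝ (Fin n) :=
  WithLp.toLp 2 (fun i => ∑ j, A i j * v j)

/-- The simply-resonant set `Dᵏ` expressed in the new variables `v`:  `v ∈ Dᵏ` iff
`|ω(Aᵀv)·k| ≤ α/𝕮` and `|π_k^⊥ ω(Aᵀv)·ℓ| ≥ 3αK^(n+3)/|k|` for all `ℓ ∈ 𝒢ⁿ_K \ ℤk`
(here `n = m+1`). -/
def Dk {m : ℕ} (ω : EuclideanSpace ℝ (Fin (m + 1)) → EuclideanSpace ℝ (Fin (m + 1)))
    (A : Matrix (Fin (m + 1)) (Fin (m + 1)) ℤ) (k : Fin (m + 1) → ℤ) (α C K : ℝ) :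
    Set (EuclideanSpace ℝ (Fin (m + 1))) :=
  {v | |⟪ω (mulVecE ((A.map ((↑) : ℤ → ℝ))ᵀ) v), castZ k⟫| ≤ α / C ∧
    ∀ l : Fin (m + 1) → ℤ, GnK K l → ¬ inZk k l →
      3 * α * K ^ (m + 1 + 3) / ‖castZ k‖ ≤
        |⟪projPerp (castZ k) (ω (mulVecE ((A.map ((↑) : ℤ → ℝ))ᵀ) v)), castZ l⟫|} 

/-! Moving from a point `z = (z₁, v̂)` of `Dᵏ` to `v = (v₁, v̂)` on the same fibre changes `Aᵀv`
by `(v₁ - z₁) k`, because the first column of `Aᵀ` is `k`.  Since both `v₁` and `z₁` lie in the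
strip `[η(-α/𝕮, v̂), η(α/𝕮, v̂)]`, whose width is at most `2α/(𝕮γ|k|²)`, the Lipschitz bound on
`ω` moves `π_k^⊥ ω(Aᵀv)·ℓ` by at most `2Lα|ℓ|/(𝕮γ|k|) ≤ αK/|k|`, which is one third of the
non-resonance margin `3αK^(n+3)/|k|` of `z`. -/

lemma projPerp_eq_starProjection {n : ℕ} (k w : EuclideanSpace ℝ (Fin n)) :
    projPerp k w = (ℝ ∙ k)ᗮ.starProjection w := by
  rw [Submodule.starProjection_orthogonal', _root_.sub_apply,
    Submodule.starProjection_singleton, real_inner_comm]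
  rfl

lemma abs_inner_projPerp_sub_le {n : ℕ} (k w w' l : EuclideanSpace ℝ (Fin n)) :
    |⟪projPerp k w, l⟫ - ⟪projPerp k w', l⟫| ≤ ‖w - w'‖ * ‖l‖ := by
  rw [projPerp_eq_starProjection, projPerp_eq_starProjection, ← inner_sub_left, ← map_sub]
  exact (abs_real_inner_le_norm _ _).trans
    (mul_le_mul_of_nonneg_right (Submodule.norm_starProjection_apply_le _ _) (norm_nonneg _))

lemma castZ_eq_sum_single {n : ℕ} (l : Fin n → ℤ) :
    castZ l = ∑ i, (l i : ℝ) • EuclideanSpace.single i 1 := by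
  ext j
  simp [castZ, Pi.single_apply]

lemma norm_castZ_le_normOneZ {n : ℕ} (l : Fin n → ℤ) : ‖castZ l‖ ≤ normOneZ l := by
  rw [castZ_eq_sum_single]
  refine (norm_sum_le _ _).trans (le_of_eq ?_)
  simp [normOneZ, norm_smul]

lemma mulVecE_mkE_sub_mulVecE_mkE {m : ℕ} (B : Matrix (Fin (m + 1)) (Fin (m + 1)) ℝ)
    (s t : ℝ) (vh : EuclideanSpace ℝ (Fin m)) :
    mulVecE B (mkE s vh) - mulVecE B (mkE t vh) = (s - t) • WithLp.toLp 2 (fun i => B i 0) := by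
  ext i
  simp only [mulVecE, mkE, Fin.sum_univ_succ, Fin.cons_zero, Fin.cons_succ, PiLp.sub_apply,
    add_sub_add_right_eq_sub, PiLp.smul_apply, smul_eq_mul]
  ring

lemma abs_inner_projPerp_sub_le_of_fibre {m : ℕ} {L : ℝ} {k : Fin (m + 1) → ℤ}
    {A : Matrix (Fin (m + 1)) (Fin (m + 1)) ℤ} (hrow : ∀ j, A 0 j = k j)
    {ω : EuclideanSpace ℝ (Fin (m + 1)) → EuclideanSpace ℝ (Fin (m + 1))}
    (hω : ∀ y y', ‖ω y - ω y'‖ ≤ L * ‖y - y'‖) (s t : ℝ) (vh : EuclideanSpace ℝ (Fin m))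
    (l : EuclideanSpace ℝ (Fin (m + 1))) :
    |⟪projPerp (castZ k) (ω (mulVecE ((A.map ((↑) : ℤ → ℝ))ᵀ) (mkE s vh))), l⟫ -
        ⟪projPerp (castZ k) (ω (mulVecE ((A.map ((↑) : ℤ → ℝ))ᵀ) (mkE t vh))), l⟫| ≤
      L * (|s - t| * ‖castZ k‖) * ‖l‖ := by
  have hcol : WithLp.toLp 2 (fun i => (A.map ((↑) : ℤ → ℝ))ᵀ i 0) = castZ k := by
    ext i
    simp [castZ, hrow]
  refine (abs_inner_projPerp_sub_le _ _ _ _).trans (mul_le_mul_of_nonneg_right ?_ (norm_nonneg _))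
  refine (hω _ _).trans_eq ?_
  rw [mulVecE_mkE_sub_mulVecE_mkE, hcol, norm_smul, Real.norm_eq_abs]

lemma abs_sub_le_of_mem_strip {f : ℝ → ℝ} {δ M s t : ℝ} (hδ : 0 ≤ δ)
    (hf : ∀ x y, |x| ≤ δ → |y| ≤ δ → |f x - f y| ≤ |x - y| / M)
    (hs : f (-δ) ≤ s) (hs' : s ≤ f δ) (ht : f (-δ) ≤ t) (ht' : t ≤ f δ) :
    |s - t| ≤ 2 * δ / M := by
  have hwidth : |f δ - f (-δ)| ≤ |δ - -δ| / M :=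
    hf _ _ (abs_of_nonneg hδ).le (by rw [abs_neg, abs_of_nonneg hδ])
  rw [sub_neg_eq_add, ← two_mul, abs_of_nonneg (mul_nonneg zero_le_two hδ)] at hwidth
  exact (abs_sub_le_of_le_of_le hs hs' ht ht').trans ((le_abs_self _).trans hwidth)

lemma lipschitz_shift_le {γ L α C N d r X : ℝ} (hγ : 0 < γ) (hL : 0 < L) (hα : 0 ≤ α)
    (hC : 2 * L / γ ≤ C) (hN : 0 ≤ N) (hdC : d ≤ 2 * (α / C) / (γ * N ^ 2))
    (hr : 0 ≤ r) (hrX : r ≤ X) :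
    L * (d * N) * r ≤ α * X / N := by
  rcases hN.eq_or_lt with rfl | hN
  · simp
  have hC0 : 0 < C := (by positivity : 0 < 2 * L / γ).trans_le hC
  have hαX : 0 ≤ α * X / N := div_nonneg (mul_nonneg hα (hr.trans hrX)) hN.le
  calc L * (d * N) * r ≤ L * (2 * (α / C) / (γ * N ^ 2) * N) * X := by gcongr
    _ = 2 * L / γ / C * (α * X / N) := by field_simp
    _ ≤ α * X / N := mul_le_of_le_one_left hαX ((div_le_one hC0).mpr hC)

lemma two_mul_le_abs_of_abs_sub_le {a b e : ℝ} (hb : 3 * e ≤ |b|) (hab : |a - b| ≤ e) :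
    2 * e ≤ |a| := by
  linarith [abs_sub_abs_le_abs_sub b a, abs_sub_comm a b]

theorem nonresonance_on_normal_set_general (m : ℕ)
    (γ L α K C : ℝ) (hγ : 0 < γ) (hL : 0 < L) (hα : 0 < α) (hK : 1 ≤ K)
    (hC : 2 * ((m + 1 : ℕ) : ℝ) * L / γ ≤ C)
    (k : Fin (m + 1) → ℤ)
    (A : Matrix (Fin (m + 1)) (Fin (m + 1)) ℤ)
    (hrow : ∀ j, A 0 j = k j)
    (ω : EuclideanSpace ℝ (Fin (m + 1)) → EuclideanSpace ℝ (Fin (m + 1)))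
    (hω : ∀ y y' : EuclideanSpace ℝ (Fin (m + 1)), ‖ω y - ω y'‖ ≤ L * ‖y - y'‖)
    (Dh : Set (EuclideanSpace ℝ (Fin m)))
    (η : ℝ → EuclideanSpace ℝ (Fin m) → ℝ)
    (hη : ∀ ϖ ϖ' : ℝ, |ϖ| ≤ α / C → |ϖ'| ≤ α / C → ∀ vh ∈ Dh,
      |η ϖ vh - η ϖ' vh| ≤ |ϖ - ϖ'| / (γ * ‖castZ k‖ ^ 2))
    (hcover : ∀ vh ∈ Dh, ∃ z₁ : ℝ,
      η (-(α / C)) vh ≤ z₁ ∧ z₁ ≤ η (α / C) vh ∧ mkE z₁ vh ∈ Dk ω A k α C K) :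
    ∀ vh ∈ Dh, ∀ v₁ : ℝ, η (-(α / C)) vh ≤ v₁ → v₁ ≤ η (α / C) vh →
      ∀ l : Fin (m + 1) → ℤ, GnK K l → ¬ inZk k l →
        2 * α * K ^ (m + 1 + 3) / ‖castZ k‖ ≤
          |⟪projPerp (castZ k)
              (ω (mulVecE ((A.map ((↑) : ℤ → ℝ))ᵀ) (mkE v₁ vh))), castZ l⟫| := by
  intro vh hvh v₁ hv₁ hv₁' l hl hlk
  obtain ⟨z₁, hz₁, hz₁', hzD⟩ := hcover vh hvh
  have hC' : 2 * L / γ ≤ C := le_trans (by gcongr; norm_num) hC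
  have hC0 : 0 < C := (by positivity : 0 < 2 * L / γ).trans_le hC'
  have hstrip : |v₁ - z₁| ≤ 2 * (α / C) / (γ * ‖castZ k‖ ^ 2) :=
    abs_sub_le_of_mem_strip (div_nonneg hα.le hC0.le) (fun x y hx hy => hη x y hx hy vh hvh)
      hv₁ hv₁' hz₁ hz₁'
  have hshift := abs_inner_projPerp_sub_le_of_fibre hrow hω v₁ z₁ vh (castZ l)
  have hlX : ‖castZ l‖ ≤ K ^ (m + 1 + 3) :=
    (norm_castZ_le_normOneZ l).trans <| hl.2.trans <| le_self_pow₀ hK (by omega)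
  have hdrift :=
    lipschitz_shift_le hγ hL hα.le hC' (norm_nonneg _) hstrip (norm_nonneg _) hlX
  have hmargin := hzD.2 l hl hlk
  rw [mul_assoc, mul_div_assoc] at hmargin ⊢
  exact two_mul_le_abs_of_abs_sub_le hmargin (hshift.trans hdrift)

/-- Lemma 1.2 of the paper.  On the normal set
`Ďᵏ = {(v₁, v̂) : η(−α/𝕮, v̂) ≤ v₁ ≤ η(α/𝕮, v̂), v̂ ∈ D̂}` one keeps the non-resonance bound
`|π_k^⊥ ω(Aᵀv)·ℓ| ≥ 2αK^(n+3)/|k|` for all `ℓ ∈ 𝒢ⁿ_K \ ℤk` (here `n = m+1 ≥ 2`). -/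
theorem nonresonance_on_normal_set (m : ℕ) (hm : 1 ≤ m)
    (γ L α K C : ℝ) (hγ : 0 < γ) (hL : 0 < L) (hα : 0 < α) (hK : 1 ≤ K)
    (hC : 2 * ((m + 1 : ℕ) : ℝ) * L / γ ≤ C)
    (k : Fin (m + 1) → ℤ) (hkgcd : Finset.univ.gcd k = 1)
    (A : Matrix (Fin (m + 1)) (Fin (m + 1)) ℤ) (hdet : A.det = 1)
    (hrow : ∀ j, A 0 j = k j)
    (hmax : (Finset.univ.sup fun p : Fin (m + 1) × Fin (m + 1) => (A p.1 p.2).natAbs) =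
      normInfN k)
    (ω : EuclideanSpace ℝ (Fin (m + 1)) → EuclideanSpace ℝ (Fin (m + 1)))
    (hω : ∀ y y' : EuclideanSpace ℝ (Fin (m + 1)), ‖ω y - ω y'‖ ≤ L * ‖y - y'‖)
    (Dh : Set (EuclideanSpace ℝ (Fin m)))
    (η : ℝ → EuclideanSpace ℝ (Fin m) → ℝ)
    (hη : ∀ ϖ ϖ' : ℝ, |ϖ| ≤ α / C → |ϖ'| ≤ α / C → ∀ vh ∈ Dh,
      |η ϖ vh - η ϖ' vh| ≤ |ϖ - ϖ'| / (γ * ‖castZ k‖ ^ 2))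
    (hcover : ∀ vh ∈ Dh, ∃ z₁ : ℝ,
      η (-(α / C)) vh ≤ z₁ ∧ z₁ ≤ η (α / C) vh ∧ mkE z₁ vh ∈ Dk ω A k α C K) :
    ∀ vh ∈ Dh, ∀ v₁ : ℝ, η (-(α / C)) vh ≤ v₁ → v₁ ≤ η (α / C) vh →
      ∀ l : Fin (m + 1) → ℤ, GnK K l → ¬ inZk k l →
        2 * α * K ^ (m + 1 + 3) / ‖castZ k‖ ≤
          |⟪projPerp (castZ k)
              (ω (mulVecE ((A.map ((↑) : ℤ → ℝ))ᵀ) (mkE v₁ vh))), castZ l⟫| :=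
  nonresonance_on_normal_set_general m γ L α K C hγ hL hα hK hC k A hrow ω hω Dh η hη hcover
end
end

section
/- Let n ≥ 2 be an integer and let k ∈ ℤⁿ be a vector whose components have greatest common divisor 1. Then there exists a matrix A ∈ SL(n, ℤ) (an n×n integer matrix with determinant 1) whose first row equals k, such that max_{i,j}|A_{ij}| = |k|_∞, every entry of the submatrix formed by the last n−1 rows of A has absolute value at most |k|_∞, and the inverse matrix satisfies max_{i,j}|(A^{-1})_{ij}| ≤ (n−1)^{(n−1)/2}·|k|_∞^{n−1}. -/
/-
Induction on the length of `w`. Write `w = (w₀, g • w')` with `g` the gcd of the tail, so that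
`w'` is primitive, and choose `u w₀ + v g = 1` with `0 ≤ u < g`, which forces `|v| ≤ max |w₀| 1`.
A completion `M'` of `w'` to an invertible matrix lifts to the completion `bezoutLift w₀ g u v M'`
of `w` with the same bound `K ≥ |w|_∞` on the entries, while the bound on the inverse gains one
factor `K`. So the inverse is bounded by `K ^ (n - 1)`, below `(n - 1) ^ ((n - 1) / 2) * K ^ (n - 1)`.
A sign change of the last row finally makes the determinant `1`.
-/

open Matrix

noncomputable section

namespace Matrix

variable {R : Type*} [CommRing R] {s : ℕ}

-- `bezoutLift a g u v M = (!![a, g; -v, u] ⊕ 1) * (1 ⊕ M)` and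
-- `bezoutLiftInv a g u v N = (1 ⊕ N) * (!![u, -g; v, a] ⊕ 1)`.
def bezoutLift (a g u v : R) (M : Matrix (Fin (s + 1)) (Fin (s + 1)) R) :
    Matrix (Fin (s + 2)) (Fin (s + 2)) R :=
  of (vecCons (vecCons a (g • M 0)) (vecCons (vecCons (-v) (u • M 0))
    fun i => vecCons 0 (M i.succ)))

def bezoutLiftInv (a g u v : R) (N : Matrix (Fin (s + 1)) (Fin (s + 1)) R) :
    Matrix (Fin (s + 2)) (Fin (s + 2)) R :=
  of (vecCons (vecCons u (vecCons (-g) 0))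
    fun i => vecCons (v * N i 0) (vecCons (a * N i 0) fun j => N i j.succ))

theorem bezoutLift_zero (a g u v : R) (M : Matrix (Fin (s + 1)) (Fin (s + 1)) R) :
    bezoutLift a g u v M 0 = vecCons a (g • M 0) := rfl

theorem bezoutLiftInv_mul_bezoutLift {a g u v : R} {M N : Matrix (Fin (s + 1)) (Fin (s + 1)) R}
    (huv : u * a + v * g = 1) (hNM : N * M = 1) :
    bezoutLiftInv a g u v N * bezoutLift a g u v M = 1 := by
  ext i j
  refine Fin.cases ?_ (fun i => ?_) i <;> refine Fin.cases ?_ (fun j => ?_) j <;>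
    simp [mul_apply, Fin.sum_univ_succ, bezoutLift, bezoutLiftInv, one_apply,
      (Fin.succ_ne_zero _).symm]
  · linear_combination huv
  · ring
  · ring
  · have := congrFun (congrFun hNM i) j
    simp only [mul_apply, Fin.sum_univ_succ, one_apply] at this
    linear_combination this + N i 0 * M 0 j * huv

variable [LinearOrder R] [IsStrictOrderedRing R]

theorem abs_bezoutLift_le {a g u v K : R} {M : Matrix (Fin (s + 1)) (Fin (s + 1)) R}
    (ha : |a| ≤ K) (hv : |v| ≤ K) (hg : ∀ j, |g * M 0 j| ≤ K) (hu : ∀ j, |u * M 0 j| ≤ K)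
    (hM : ∀ i j, |M i j| ≤ K) (i j : Fin (s + 2)) : |bezoutLift a g u v M i j| ≤ K := by
  have hK : 0 ≤ K := (abs_nonneg a).trans ha
  refine Fin.cases ?_ (Fin.cases ?_ fun i => ?_) i <;> refine Fin.cases ?_ (fun j => ?_) j <;>
    simp [bezoutLift, *, -abs_mul]

theorem abs_bezoutLiftInv_le {a g u v L : R} {N : Matrix (Fin (s + 1)) (Fin (s + 1)) R}
    (hu : |u| ≤ L) (hg : |g| ≤ L) (hv : ∀ i, |v * N i 0| ≤ L) (ha : ∀ i, |a * N i 0| ≤ L)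
    (hN : ∀ i j, |N i j| ≤ L) (i j : Fin (s + 2)) : |bezoutLiftInv a g u v N i j| ≤ L := by
  have hL : 0 ≤ L := (abs_nonneg u).trans hu
  refine Fin.cases ?_ (fun i => ?_) i <;>
    refine Fin.cases ?_ (Fin.cases ?_ fun j => ?_) j <;> simp [bezoutLiftInv, *, -abs_mul]

end Matrix

theorem Int.exists_bezout_bounded {a g : ℤ} (h : IsCoprime a g) (hg : 0 < g) :
    ∃ u v : ℤ, u * a + v * g = 1 ∧ 0 ≤ u ∧ u < g ∧ |v| ≤ max |a| 1 := by
  obtain ⟨u₀, v₀, huv₀⟩ := h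
  set u := u₀ % g with hu
  set v := v₀ + u₀ / g * a
  have huv : u * a + v * g = 1 := by
    rw [hu, Int.emod_def]; linear_combination huv₀
  have hu0 : 0 ≤ u := Int.emod_nonneg _ hg.ne'
  have hug : u < g := Int.emod_lt_of_pos _ hg
  refine ⟨u, v, huv, hu0, hug, le_of_mul_le_mul_right ?_ hg⟩
  have hvg : v * g = 1 - u * a := by rw [← huv, add_sub_cancel_left]
  calc |v| * g = |1 - u * a| := by rw [← hvg, abs_mul, abs_of_pos hg]
    _ ≤ 1 + u * |a| := (abs_sub _ _).trans (by rw [abs_one, abs_mul, abs_of_nonneg hu0])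
    _ ≤ max |a| 1 * g := by nlinarith [le_max_left |a| 1, le_max_right |a| 1]

theorem Finset.gcd_univ_fin_succ {α : Type*} [CommMonoidWithZero α]
    [NormalizedGCDMonoid α] {n : ℕ} (f : Fin (n + 1) → α) :
    univ.gcd f = GCDMonoid.gcd (f 0) (univ.gcd (Fin.tail f)) := by
  rw [Fin.univ_succ, Finset.gcd_cons, Finset.map_eq_image, Finset.gcd_image]
  rfl

theorem Int.one_le_of_finsetGcd_eq_one {ι : Type*} {s : Finset ι} {f : ι → ℤ} {K : ℤ}
    (hf : s.gcd f = 1) (hK : ∀ i ∈ s, |f i| ≤ K) : 1 ≤ K := by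
  obtain ⟨i, hi, hfi⟩ := Finset.gcd_ne_zero_iff.1 (hf ▸ one_ne_zero)
  exact (Int.one_le_abs hfi).trans (hK i hi)

open Finset in
theorem exists_tail_eq_mul_primitive {s : ℕ} {K : ℤ} {w : Fin (s + 2) → ℤ}
    (hw : univ.gcd w = 1) (hK : ∀ i, |w i| ≤ K) :
    ∃ (g u v : ℤ) (w' : Fin (s + 1) → ℤ), (∀ i, w i.succ = g * w' i) ∧ univ.gcd w' = 1 ∧
      (∀ i, |w' i| ≤ K) ∧ u * w 0 + v * g = 1 ∧ |u| ≤ K ∧ |v| ≤ K ∧ |g| ≤ K ∧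
      ∀ i, |u * w' i| ≤ K := by
  have hK1 : 1 ≤ K := Int.one_le_of_finsetGcd_eq_one hw fun i _ => hK i
  set g := univ.gcd (Fin.tail w)
  rw [gcd_univ_fin_succ] at hw
  rcases (Int.finsetGcd_nonneg : 0 ≤ g).eq_or_lt with hg | hg
  · -- the tail vanishes, so `w 0 = ±1` and any primitive `w'` will do
    have htail : ∀ i : Fin (s + 1), w i.succ = 0 := fun i =>
      gcd_eq_zero_iff.1 hg.symm i (mem_univ i)
    rw [← hg, gcd_zero_right, ← Int.abs_eq_normalize] at hw
    have hK0 : |(0 : ℤ)| ≤ K := by simpa using zero_le_one.trans hK1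
    refine ⟨0, w 0, 0, fun _ => 1, by simp [htail], ?_, by simpa, ?_, by simpa [hw],
      hK0, hK0, by simpa [hw]⟩
    · exact Int.eq_one_of_dvd_one Int.finsetGcd_nonneg (gcd_dvd (mem_univ 0))
    · rw [mul_zero, add_zero, ← abs_mul_abs_self, hw, one_mul]
  · obtain ⟨i₀, -, hi₀⟩ := gcd_ne_zero_iff.1 hg.ne'
    set w' : Fin (s + 1) → ℤ := fun i => w i.succ / g
    have hmul : ∀ i, w i.succ = g * w' i := fun i =>
      (Int.mul_ediv_cancel' (gcd_dvd (f := Fin.tail w) (mem_univ i))).symm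
    have hcop : IsCoprime (w 0) g := (gcd_isUnit_iff _ _).1 (hw ▸ isUnit_one)
    obtain ⟨u, v, huv, hu0, hug, hv⟩ := Int.exists_bezout_bounded hcop hg
    have hgw' : ∀ i, g * |w' i| ≤ K := fun i => by
      have := hK i.succ
      rwa [hmul, abs_mul, abs_of_pos hg] at this
    have hw'₀ : w' i₀ ≠ 0 := right_ne_zero_of_mul (by rw [← hmul]; exact hi₀)
    have hgK : g ≤ K := (le_mul_of_one_le_right hg.le (Int.one_le_abs hw'₀)).trans (hgw' i₀)
    refine ⟨g, u, v, w', hmul, gcd_div_eq_one (mem_univ i₀) hi₀,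
      fun i => (le_mul_of_one_le_left (abs_nonneg _) hg).trans (hgw' i), huv,
      by rw [abs_of_nonneg hu0]; exact hug.le.trans hgK, hv.trans (max_le (hK 0) hK1),
      by rwa [abs_of_pos hg], fun i => ?_⟩
    rw [abs_mul, abs_of_nonneg hu0]
    exact (mul_le_mul_of_nonneg_right hug.le (abs_nonneg _)).trans (hgw' i)

open Finset in
theorem exists_unimodular_completion {K : ℤ} : ∀ {s : ℕ} {w : Fin (s + 1) → ℤ},
    univ.gcd w = 1 → (∀ i, |w i| ≤ K) → ∃ M N : Matrix (Fin (s + 1)) (Fin (s + 1)) ℤ,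
      N * M = 1 ∧ M 0 = w ∧ (∀ i j, |M i j| ≤ K) ∧ ∀ i j, |N i j| ≤ K ^ s
  | 0, w, hw, hK => by
    have hw0 : |w 0| = 1 := by
      rw [Int.abs_eq_normalize, ← gcd_singleton, ← hw]
      rfl
    refine ⟨of fun _ _ => w 0, of fun _ _ => w 0, ?_, ?_, fun _ _ => hK 0, by simp [hw0]⟩
    · ext i j
      rw [Subsingleton.elim (α := Fin 1) i j]
      simp [mul_apply, ← abs_mul_abs_self (w 0), hw0]
    · funext j
      rw [Subsingleton.elim (α := Fin 1) j 0]
      rfl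
  | s + 1, w, hw, hK => by
    obtain ⟨g, u, v, w', hsplit, hw', hK', huv, hu, hv, hg, huw'⟩ :=
      exists_tail_eq_mul_primitive hw hK
    obtain ⟨M, N, hNM, hrow, hM, hN⟩ := exists_unimodular_completion hw' hK'
    have hK1 : 1 ≤ K := Int.one_le_of_finsetGcd_eq_one hw fun i _ => hK i
    have hKs : K ≤ K ^ (s + 1) := le_self_pow₀ hK1 s.succ_ne_zero
    have hNs : ∀ i j, |N i j| ≤ K ^ (s + 1) := fun i j =>
      (hN i j).trans (pow_le_pow_right₀ hK1 s.le_succ)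
    have hxN : ∀ {x}, |x| ≤ K → ∀ i, |x * N i 0| ≤ K ^ (s + 1) := fun hx i => by
      rw [abs_mul, pow_succ']
      exact mul_le_mul hx (hN i 0) (abs_nonneg _) (zero_le_one.trans hK1)
    refine ⟨bezoutLift (w 0) g u v M, bezoutLiftInv (w 0) g u v N,
      bezoutLiftInv_mul_bezoutLift huv hNM, ?_,
      abs_bezoutLift_le (hK 0) hv (fun j => ?_) (hrow ▸ huw') hM,
      abs_bezoutLiftInv_le (hu.trans hKs) (hg.trans hKs) (hxN hv) (hxN (hK 0)) hNs⟩
    · rw [bezoutLift_zero, hrow]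
      funext j
      refine Fin.cases rfl (fun j => ?_) j
      simp [hsplit]
    · rw [hrow, ← hsplit]
      exact hK _

theorem Matrix.exists_det_eq_one_of_mul_eq_one {n : Type*} [Fintype n] [DecidableEq n]
    {M N : Matrix n n ℤ} (h : N * M = 1) (i₀ : n) :
    ∃ A B : Matrix n n ℤ, A.det = 1 ∧ B * A = 1 ∧ (∀ i ≠ i₀, A i = M i) ∧
      (∀ i j, |A i j| = |M i j|) ∧ ∀ i j, |B i j| = |N i j| := by
  have hdet : |M.det| = 1 := Int.isUnit_iff_abs_eq.1
    (IsUnit.of_mul_eq_one_right N.det (by rw [← det_mul, h, det_one]))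
  set d := Function.update (1 : n → ℤ) i₀ M.det
  have hd : ∀ i, |d i| = 1 := fun i => by
    rcases eq_or_ne i i₀ with rfl | hi
    · simp [d, hdet]
    · simp [d, hi]
  have hdd : diagonal d * diagonal d = 1 := by
    rw [diagonal_mul_diagonal, ← diagonal_one]
    congr 1
    funext i
    rw [← abs_mul_abs_self, hd, one_mul]
  refine ⟨diagonal d * M, N * diagonal d, ?_, ?_, fun i hi => ?_, fun i j => ?_, fun i j => ?_⟩
  · rw [det_mul, det_diagonal, Finset.prod_update_of_mem (Finset.mem_univ _)]
    simp [← abs_mul_abs_self M.det, hdet]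
  · rw [Matrix.mul_assoc, ← Matrix.mul_assoc (diagonal d), hdd, Matrix.one_mul, h]
  · ext j
    simp [d, hi]
  · rw [diagonal_mul, abs_mul, hd, one_mul]
  · rw [mul_diagonal, abs_mul, hd, mul_one]

theorem abs_le_normInfN {n : ℕ} (k : Fin n → ℤ) (i : Fin n) : |k i| ≤ normInfN k := by
  rw [Int.abs_eq_natAbs]
  exact_mod_cast Finset.le_sup (f := fun i => (k i).natAbs) (Finset.mem_univ i)

/-- For every `k ∈ ℤⁿ` (`n = m + 2 ≥ 2`) with coprime components there is a
matrix `A ∈ SL(n, ℤ)` whose first row is `k`, whose entries have max-norm exactly `|k|_∞`,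
whose last `n − 1` rows have entries bounded by `|k|_∞`, and whose inverse satisfies
`max_{i,j} |(A⁻¹)_{ij}| ≤ (n−1)^((n−1)/2) |k|_∞^(n−1)`. -/
theorem exists_sl_matrix_first_row (m : ℕ) (k : Fin (m + 2) → ℤ)
    (hgcd : Finset.univ.gcd k = 1) :
    ∃ A : Matrix (Fin (m + 2)) (Fin (m + 2)) ℤ,
      A.det = 1 ∧
      (∀ j, A 0 j = k j) ∧
      (Finset.univ.sup fun p : Fin (m + 2) × Fin (m + 2) => (A p.1 p.2).natAbs) =
        normInfN k ∧
      (∀ i : Fin (m + 2), i ≠ 0 → ∀ j, (A i j).natAbs ≤ normInfN k) ∧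
      (∀ i j, |((A⁻¹ i j : ℤ) : ℝ)| ≤
        ((m + 1 : ℕ) : ℝ) ^ (((m + 1 : ℕ) : ℝ) / 2) * ((normInfN k : ℕ) : ℝ) ^ (m + 1)) := by
  obtain ⟨M, N, hNM, hrow, hM, hN⟩ := exists_unimodular_completion hgcd (abs_le_normInfN k)
  obtain ⟨A, B, hdet, hBA, hA0, hA, hB⟩ := exists_det_eq_one_of_mul_eq_one hNM (Fin.last _)
  have hrowA : ∀ j, A 0 j = k j := fun j => by rw [hA0 0 Fin.last_pos.ne, hrow]
  have hAK : ∀ i j, (A i j).natAbs ≤ normInfN k := fun i j => by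
    have := (hA i j).trans_le (hM i j)
    rwa [Int.abs_eq_natAbs, Nat.cast_le] at this
  refine ⟨A, hdet, hrowA, le_antisymm (Finset.sup_le fun p _ => hAK p.1 p.2)
    (Finset.sup_le fun j _ => ?_), fun i _ j => hAK i j, fun i j => ?_⟩
  · rw [← hrowA j]
    exact Finset.le_sup (f := fun p : Fin (m + 2) × Fin (m + 2) => (A p.1 p.2).natAbs)
      (Finset.mem_univ (0, j))
  · rw [inv_eq_left_inv hBA, ← Int.cast_abs, hB]
    calc ((|N i j| : ℤ) : ℝ) ≤ ((normInfN k : ℕ) : ℝ) ^ (m + 1) := by exact_mod_cast hN i j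
      _ ≤ _ := le_mul_of_one_le_left (by positivity)
        (Real.one_le_rpow (by norm_cast; omega) (by positivity))
end
end
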